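/- arXiv:1503.08378 — 9 statements merged into one kernel-verified Lean document; each statement's English description precedes it below -/
import Mathlib

section
/- Let α be a sum of k roots of unity (in the algebraic integers), and let N be a non-zero integer. If N divides α in the ring of algebraic integers, then either α = 0 or k ≥ |N|. -/
/-!
Work in the number field generated by `β` and the roots of unity. Since the norm of `β ≠ 0` is
a non-zero integer, some embedding `σ` has `‖σ β‖ ≥ 1`; but `σ α` is again a sum of `k` roots of
unity, so `|N| ≤ |N| ‖σ β‖ = ‖σ α‖ ≤ k`.
-/

open NumberField

def IsRootOfUnity (z : ℂ) : Prop := ∃ n : ℕ, 0 < n ∧ z ^ n = 1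

theorem isRootOfUnity_iff_isOfFinOrder {z : ℂ} : IsRootOfUnity z ↔ IsOfFinOrder z :=
  isOfFinOrder_iff_pow_eq_one.symm

theorem IsOfFinOrder.isIntegral {R A : Type*} [CommRing R] [Ring A] [Algebra R A] {x : A}
    (hx : IsOfFinOrder x) : IsIntegral R x := by
  obtain ⟨n, hn, hxn⟩ := isOfFinOrder_iff_pow_eq_one.mp hx
  exact IsIntegral.of_pow hn (hxn ▸ isIntegral_one)

theorem NumberField.abs_le_card_of_sum_isOfFinOrder_eq_intCast_mul {K ι : Type*} [Field K]
    [NumberField K] {s : Finset ι} {ζ : ι → K} (hζ : ∀ i ∈ s, IsOfFinOrder (ζ i)) {b : K}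
    (hb : IsIntegral ℤ b) (hb0 : b ≠ 0) {N : ℤ} (h : ∑ i ∈ s, ζ i = N * b) :
    |N| ≤ s.card := by
  obtain ⟨σ, hσ⟩ : ∃ σ : K →+* ℂ, 1 ≤ ‖σ b‖ :=
    exists_conjugate_one_le_norm (α := ⟨b, hb⟩) fun h =>
      hb0 (congrArg ((↑) : 𝓞 K → K) h)
  have : |(N : ℝ)| ≤ s.card := calc
    |(N : ℝ)| ≤ |(N : ℝ)| * ‖σ b‖ := le_mul_of_one_le_right (abs_nonneg _) hσ
    _ = ‖σ (∑ i ∈ s, ζ i)‖ := by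
      rw [h, map_mul, map_intCast, norm_mul, Complex.norm_intCast]
    _ ≤ ∑ i ∈ s, ‖σ (ζ i)‖ := by
      rw [map_sum]
      exact norm_sum_le _ _
    _ = ∑ i ∈ s, 1 :=
      Finset.sum_congr rfl fun i hi => ((σ : K →* ℂ).isOfFinOrder (hζ i hi)).norm_eq_one
    _ = s.card := by simp
  exact_mod_cast this

theorem sum_of_roots_of_unity_divisible_general (k : ℕ) (α : ℂ) (N : ℤ)
    (hsum : ∃ f : Fin k → ℂ, (∀ i, IsRootOfUnity (f i)) ∧ α = ∑ i, f i)
    (hdvd : ∃ β : ℂ, IsIntegral ℤ β ∧ α = (N : ℂ) * β) :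
    α = 0 ∨ (|N| : ℤ) ≤ (k : ℤ) := by
  obtain ⟨f, hf, rfl⟩ := hsum
  obtain ⟨β, hβ, hfβ⟩ := hdvd
  rcases eq_or_ne β 0 with rfl | hβ0
  · exact .inl (by simpa using hfβ)
  right
  replace hf i := isRootOfUnity_iff_isOfFinOrder.mp (hf i)
  let K := IntermediateField.adjoin ℚ (insert β (Set.range f))
  have : FiniteDimensional ℚ K := IntermediateField.finiteDimensional_adjoin <| by
    rintro x (rfl | ⟨i, rfl⟩)
    exacts [hβ.tower_top, (hf i).isIntegral]
  have : NumberField K := ⟨⟩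
  have hβK : β ∈ K := IntermediateField.subset_adjoin _ _ (Set.mem_insert _ _)
  have hfK i : f i ∈ K :=
    IntermediateField.subset_adjoin _ _ (Set.mem_insert_of_mem _ ⟨i, rfl⟩)
  simpa using abs_le_card_of_sum_isOfFinOrder_eq_intCast_mul (K := K) (s := Finset.univ)
    (ζ := fun i => ⟨f i, hfK i⟩) (b := ⟨β, hβK⟩)
    (fun i _ => (Subtype.val_injective.isOfFinOrder_iff (f := (K.val : K →* ℂ))).mp (hf i))
    ((isIntegral_algebraMap_iff (algebraMap K ℂ).injective).mp hβ)
    (ne_of_apply_ne Subtype.val hβ0)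
    (Subtype.ext (by simpa using hfβ))

/-- If `α` is a sum of `k` roots of unity and a non-zero integer `N` divides `α`
in the ring of algebraic integers, then `α = 0` or `k ≥ |N|`. -/
theorem sum_of_roots_of_unity_divisible (k : ℕ) (α : ℂ) (N : ℤ)
    (hN : N ≠ 0)
    (hsum : ∃ f : Fin k → ℂ, (∀ i, IsRootOfUnity (f i)) ∧ α = ∑ i, f i)
    (hdvd : ∃ β : ℂ, IsIntegral ℤ β ∧ α = (N : ℂ) * β) :
    α = 0 ∨ (|N| : ℤ) ≤ (k : ℤ) :=
  sum_of_roots_of_unity_divisible_general k α N hsum hdvd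
end

section
/- If four roots of unity η₁, η₂, η₃, η₄ satisfy η₁ + η₂ + η₃ + η₄ = 0, then two of them sum to 0 (and hence the other two also sum to 0); i.e., there exist distinct indices i, j with η_i + η_j = 0. -/
lemma IsRootOfUnity.norm_eq_one {z : ℂ} (h : IsRootOfUnity z) : ‖z‖ = 1 :=
  let ⟨_, hn, hzn⟩ := h
  Complex.norm_eq_one_of_pow_eq_one hzn hn.ne'

lemma Finset.sum_inv_eq_zero_of_norm_eq_one {𝕜 ι : Type*} [RCLike 𝕜] {s : Finset ι} {z : ι → 𝕜}
    (hz : ∀ i ∈ s, ‖z i‖ = 1) (hsum : ∑ i ∈ s, z i = 0) : ∑ i ∈ s, (z i)⁻¹ = 0 := by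
  rw [Finset.sum_congr rfl fun i hi => RCLike.inv_eq_conj (hz i hi), ← map_sum, hsum, map_zero]

lemma add_mul_add_mul_add_eq_zero_of_sum_eq_zero_of_sum_inv_eq_zero {K : Type*} [Field K]
    {a b c d : K} (ha : a ≠ 0) (hb : b ≠ 0) (hc : c ≠ 0) (hd : d ≠ 0)
    (hsum : a + b + c + d = 0) (hinv : a⁻¹ + b⁻¹ + c⁻¹ + d⁻¹ = 0) :
    (a + b) * (a + c) * (b + c) = 0 := by
  have he₃ : a * b * c + a * b * d + a * c * d + b * c * d = 0 := by
    field_simp at hinv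
    linear_combination hinv
  linear_combination (a * b + a * c + b * c) * hsum - he₃

/-- If four roots of unity sum to zero, then two of them sum to zero. -/
theorem four_roots_of_unity_sum_zero (η : Fin 4 → ℂ)
    (h : ∀ i, IsRootOfUnity (η i))
    (hsum : ∑ i, η i = 0) :
    ∃ i j : Fin 4, i ≠ j ∧ η i + η j = 0 := by
  have hnorm i : ‖η i‖ = 1 := (h i).norm_eq_one
  have hne i : η i ≠ 0 := norm_ne_zero_iff.mp ((hnorm i).trans_ne one_ne_zero)
  have hinv := Finset.sum_inv_eq_zero_of_norm_eq_one (fun i _ => hnorm i) hsum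
  rw [Fin.sum_univ_four] at hsum hinv
  have hprod := add_mul_add_mul_add_eq_zero_of_sum_eq_zero_of_sum_inv_eq_zero
    (hne 0) (hne 1) (hne 2) (hne 3) hsum hinv
  rcases mul_eq_zero.mp hprod with hprod' | h12
  · rcases mul_eq_zero.mp hprod' with h01 | h02
    · exact ⟨0, 1, by decide, h01⟩
    · exact ⟨0, 2, by decide, h02⟩
  · exact ⟨1, 2, by decide, h12⟩
end

section
/- Let a, b be non-zero rational numbers and η, θ roots of unity with aη + bθ ∈ ℚ. Then, after possibly swapping the pairs (a,η) and (b,θ) and possibly replacing (a,η) by (−a,−η) and/or (b,θ) by (−b,−θ): either η, θ ∈ {1, −1}, or η is a primitive cube root of unity with θ = η⁻¹ and a = b, or θ = −η and a = b. -/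
/-- `(a', η')` is obtained from `(a, η)` by possibly replacing it with `(-a, -η)`. -/
def SignAdj (a : ℚ) (η : ℂ) (a' : ℚ) (η' : ℂ) : Prop :=
  (a' = a ∧ η' = η) ∨ (a' = -a ∧ η' = -η)

/-- `(a', η', b', θ')` is obtained from `(a, η, b, θ)` by possibly swapping the two pairs
and possibly changing signs of each pair. -/
def Adjust (a b : ℚ) (η θ : ℂ) (a' b' : ℚ) (η' θ' : ℂ) : Prop :=
  (SignAdj a η a' η' ∧ SignAdj b θ b' θ') ∨ (SignAdj a η b' θ' ∧ SignAdj b θ a' η')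

/-!
Complex conjugation turns `aη + bθ = q` into `aη⁻¹ + bθ⁻¹ = q`. If `q = 0`, multiplying the two
relations gives `a² = b²`, whence `θ = ∓η`. If `q ≠ 0`, substituting `aη = q - bθ` and
`aη⁻¹ = q - bθ⁻¹` into `(aη)(aη⁻¹) = a²` shows that `θ + θ⁻¹` is rational; being an algebraic
integer of absolute value at most `2`, it is an integer `n ∈ [-2, 2]`, and likewise
`η + η⁻¹ = m`. The difference of the two relations, `a(η - η⁻¹) = -b(θ - θ⁻¹)`, squares to
`a²(m² - 4) = b²(n² - 4)`, which forces `m² = n²` since `3` is not a rational square. Then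
`m² = 4` gives `η, θ = ±1`, `m² = 0` gives `q = 0`, and `m² = 1` makes `η, θ` primitive cube
roots of unity after a change of sign, where the two relations force `θ = η⁻¹` and `a = b`.
-/

open ComplexConjugate Polynomial

namespace IsRootOfUnity

variable {η : ℂ}

lemma ne_zero (h : IsRootOfUnity η) : η ≠ 0 := by
  obtain ⟨n, hn, hη⟩ := h
  rintro rfl
  simp [zero_pow hn.ne'] at hη

lemma norm_eq_one_s3 (h : IsRootOfUnity η) : ‖η‖ = 1 :=
  let ⟨_, hn, hη⟩ := h
  Complex.norm_eq_one_of_pow_eq_one hη hn.ne'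

lemma conj_eq_inv (h : IsRootOfUnity η) : conj η = η⁻¹ :=
  (Complex.inv_eq_conj h.norm_eq_one_s3).symm

lemma inv (h : IsRootOfUnity η) : IsRootOfUnity η⁻¹ :=
  let ⟨n, hn, hη⟩ := h
  ⟨n, hn, by rw [inv_pow, hη, inv_one]⟩

lemma isIntegral (h : IsRootOfUnity η) : IsIntegral ℤ η :=
  let ⟨_, hn, hη⟩ := h
  IsIntegral.of_pow hn (hη ▸ isIntegral_one)

lemma exists_int_add_inv_eq (h : IsRootOfUnity η) (hrat : ∃ r : ℚ, η + η⁻¹ = r) :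
    ∃ m : ℤ, |m| ≤ 2 ∧ η + η⁻¹ = m := by
  obtain ⟨m, hm⟩ := (h.isIntegral.add h.inv.isIntegral).exists_int_iff_exists_rat.mp hrat
  refine ⟨m, ?_, hm⟩
  have : ‖η + η⁻¹‖ ≤ 2 := by
    calc ‖η + η⁻¹‖ ≤ ‖η‖ + ‖η⁻¹‖ := norm_add_le _ _
      _ = 2 := by rw [norm_inv, h.norm_eq_one_s3]; norm_num
  rw [hm, Complex.norm_intCast] at this
  exact_mod_cast this

end IsRootOfUnity

lemma eq_one_or_eq_neg_one_of_add_inv_sq_eq_four {η : ℂ} (hη : η ≠ 0)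
    (h : (η + η⁻¹) ^ 2 = 4) : η = 1 ∨ η = -1 := by
  refine sq_eq_one_iff.mp (sub_eq_zero.mp (pow_eq_zero_iff two_ne_zero |>.mp ?_))
  field_simp at h
  linear_combination h

lemma isPrimitiveRoot_three_of_add_inv_eq_neg_one {η : ℂ} (h : η + η⁻¹ = -1) :
    IsPrimitiveRoot η 3 := by
  have hη : η ≠ 0 := by rintro rfl; norm_num at h
  rw [← isRoot_cyclotomic_iff, cyclotomic_three, IsRoot, eval_add, eval_add, eval_pow, eval_X,
    eval_one]
  field_simp at h
  linear_combination h

lemma four_mul_sq_ne_three_mul_sq {a b : ℚ} (hb : b ≠ 0) : 4 * a ^ 2 ≠ 3 * b ^ 2 := by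
  intro h
  have : ¬ IsSquare (3 : ℚ) := by norm_num
  exact this ⟨2 * a / b, by field_simp; linear_combination -h⟩

lemma eq_of_sq_mul_sub_four_eq {a b x y : ℚ} (ha : a ≠ 0) (hb : b ≠ 0)
    (hx : x = 0 ∨ x = 1 ∨ x = 4) (hy : y = 0 ∨ y = 1 ∨ y = 4)
    (h : a ^ 2 * (x - 4) = b ^ 2 * (y - 4)) : x = y := by
  rcases hx with rfl | rfl | rfl <;> rcases hy with rfl | rfl | rfl <;> norm_num at h ⊢
  all_goals first
    | contradiction
    | exact four_mul_sq_ne_three_mul_sq (a := a) hb (by linarith)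
    | exact four_mul_sq_ne_three_mul_sq (a := b) ha (by linarith)

lemma Int.cast_sq_eq_zero_or_one_or_four {R : Type*} [Ring R] {m : ℤ} (hm : |m| ≤ 2) :
    (m : R) ^ 2 = 0 ∨ (m : R) ^ 2 = 1 ∨ (m : R) ^ 2 = 4 := by
  obtain ⟨h₁, h₂⟩ := abs_le.mp hm
  interval_cases m <;> norm_num

namespace SignAdj

variable {a a' : ℚ} {η η' : ℂ}

lemma refl (a : ℚ) (η : ℂ) : SignAdj a η a η := Or.inl ⟨rfl, rfl⟩

lemma neg (a : ℚ) (η : ℂ) : SignAdj a η (-a) (-η) := Or.inr ⟨rfl, rfl⟩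

lemma mul_eq_and_mul_inv_eq (h : SignAdj a η a' η') :
    (a' : ℂ) * η' = a * η ∧ (a' : ℂ) * η'⁻¹ = a * η⁻¹ := by
  rcases h with ⟨rfl, rfl⟩ | ⟨rfl, rfl⟩
  · exact ⟨rfl, rfl⟩
  · constructor <;> push_cast <;> ring

end SignAdj

lemma exists_signAdj_add_inv_eq_neg_one (a : ℚ) {η : ℂ} (h : (η + η⁻¹) ^ 2 = 1) :
    ∃ a' η', SignAdj a η a' η' ∧ η' + η'⁻¹ = -1 := by
  rcases sq_eq_one_iff.mp h with h | h
  · exact ⟨-a, -η, SignAdj.neg a η, by rw [inv_neg, ← neg_add, h]⟩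
  · exact ⟨a, η, SignAdj.refl a η, h⟩

section TwoTerms

variable {a b q : ℚ} {η θ : ℂ}

lemma exists_rat_add_inv_eq (hη : η ≠ 0) (hθ : θ ≠ 0) (hb : b ≠ 0) (hq : q ≠ 0)
    (h₁ : a * η + b * θ = q) (h₂ : a * η⁻¹ + b * θ⁻¹ = q) : ∃ r : ℚ, θ + θ⁻¹ = r := by
  refine ⟨(q ^ 2 + b ^ 2 - a ^ 2) / (q * b), ?_⟩
  have hqb : (q : ℂ) * b ≠ 0 := by exact_mod_cast mul_ne_zero hq hb
  push_cast
  rw [eq_div_iff hqb]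
  linear_combination (q - b * θ⁻¹) * h₁ + a * η * h₂ + b ^ 2 * mul_inv_cancel₀ hθ
    - a ^ 2 * mul_inv_cancel₀ hη

lemma exists_signAdj_eq_neg_of_add_eq_zero (hb : b ≠ 0) (hη : η ≠ 0) (hθ : θ ≠ 0)
    (h₁ : a * η + b * θ = 0) (h₂ : a * η⁻¹ + b * θ⁻¹ = 0) :
    ∃ b' θ', SignAdj b θ b' θ' ∧ b' = a ∧ θ' = -η := by
  have hsq : a ^ 2 = b ^ 2 := by
    have : (a : ℂ) ^ 2 = b ^ 2 := by
      linear_combination a * η⁻¹ * h₁ - b * θ * h₂ - a ^ 2 * mul_inv_cancel₀ hη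
        + b ^ 2 * mul_inv_cancel₀ hθ
    exact_mod_cast this
  have hb' : (b : ℂ) ≠ 0 := by exact_mod_cast hb
  rcases sq_eq_sq_iff_eq_or_eq_neg.mp hsq with rfl | rfl
  · exact ⟨a, θ, SignAdj.refl a θ, rfl, mul_left_cancel₀ hb' (by linear_combination h₁)⟩
  · refine ⟨-b, -θ, SignAdj.neg b θ, rfl, ?_⟩
    exact neg_inj.mpr (mul_left_cancel₀ hb' (by push_cast at h₁; linear_combination h₁))

lemma eq_inv_and_eq_of_add_inv_eq_neg_one (hq : q ≠ 0) (h₁ : a * η + b * θ = q)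
    (h₂ : a * η⁻¹ + b * θ⁻¹ = q) (hη : η + η⁻¹ = -1) (hθ : θ + θ⁻¹ = -1) :
    θ = η⁻¹ ∧ a = b := by
  have hη₀ : η ≠ 0 := by rintro rfl; norm_num at hη
  have hθ₀ : θ ≠ 0 := by rintro rfl; norm_num at hθ
  have hηη : η * η⁻¹ = 1 := mul_inv_cancel₀ hη₀
  have hd : η - η⁻¹ ≠ 0 := by
    intro h
    have : (η - η⁻¹) ^ 2 = -3 := by linear_combination (η + η⁻¹ - 1) * hη - 4 * hηη
    rw [h] at this
    norm_num at this
  have hθη : (θ - η) * (θ - η⁻¹) = 0 := by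
    linear_combination θ * hθ - θ * hη + hηη - mul_inv_cancel₀ hθ₀
  rcases mul_eq_zero.mp hθη with h | h
  · rw [sub_eq_zero.mp h] at h₁ h₂
    have hab : (a + b : ℂ) = 0 := mul_right_cancel₀ hd (by linear_combination h₁ - h₂)
    exact absurd (by exact_mod_cast (show (q : ℂ) = 0 by linear_combination η * hab - h₁)) hq
  · rw [sub_eq_zero.mp h] at h₁ h₂
    rw [inv_inv] at h₂
    have hab : (a : ℂ) = b := mul_right_cancel₀ hd (by linear_combination h₁ - h₂)
    exact ⟨sub_eq_zero.mp h, by exact_mod_cast hab⟩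

lemma sq_mul_sq_add_inv_sub_four_eq (hη : η ≠ 0) (hθ : θ ≠ 0) (h₁ : a * η + b * θ = q)
    (h₂ : a * η⁻¹ + b * θ⁻¹ = q) :
    (a : ℂ) ^ 2 * ((η + η⁻¹) ^ 2 - 4) = b ^ 2 * ((θ + θ⁻¹) ^ 2 - 4) := by
  linear_combination (a * (η - η⁻¹) - b * (θ - θ⁻¹)) * (h₁ - h₂)
    + 4 * a ^ 2 * mul_inv_cancel₀ hη - 4 * b ^ 2 * mul_inv_cancel₀ hθ

lemma rational_combination_of_two_roots_of_unity_of_ne_zero (ha : a ≠ 0) (hb : b ≠ 0)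
    (hq : q ≠ 0) (hη : IsRootOfUnity η) (hθ : IsRootOfUnity θ)
    (h₁ : a * η + b * θ = q) (h₂ : a * η⁻¹ + b * θ⁻¹ = q) :
    ((η = 1 ∨ η = -1) ∧ (θ = 1 ∨ θ = -1)) ∨
      ∃ a' b' η' θ', SignAdj a η a' η' ∧ SignAdj b θ b' θ' ∧
        IsPrimitiveRoot η' 3 ∧ θ' = η'⁻¹ ∧ a' = b' := by
  obtain ⟨m, hm, hηm⟩ := hη.exists_int_add_inv_eq <| exists_rat_add_inv_eq (a := b)
    hθ.ne_zero hη.ne_zero ha hq (by linear_combination h₁) (by linear_combination h₂)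
  obtain ⟨n, hn, hθn⟩ := hθ.exists_int_add_inv_eq <|
    exists_rat_add_inv_eq hη.ne_zero hθ.ne_zero hb hq h₁ h₂
  have htrace : a * m + b * n = 2 * q := by
    have : (a * m + b * n : ℂ) = 2 * q := by
      rw [← hηm, ← hθn]
      linear_combination h₁ + h₂
    exact_mod_cast this
  have hmn : (m : ℚ) ^ 2 = n ^ 2 := by
    refine eq_of_sq_mul_sub_four_eq ha hb (Int.cast_sq_eq_zero_or_one_or_four hm)
      (Int.cast_sq_eq_zero_or_one_or_four hn) ?_
    have := sq_mul_sq_add_inv_sub_four_eq hη.ne_zero hθ.ne_zero h₁ h₂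
    rw [hηm, hθn] at this
    exact_mod_cast this
  rcases Int.cast_sq_eq_zero_or_one_or_four (R := ℚ) hm with h0 | h1 | h4
  · have hm0 : (m : ℚ) = 0 := pow_eq_zero_iff two_ne_zero |>.mp h0
    have hn0 : (n : ℚ) = 0 := pow_eq_zero_iff two_ne_zero |>.mp (hmn ▸ h0)
    simp [hm0, hn0, hq] at htrace
  · right
    obtain ⟨a', η', hη', hη'm⟩ := exists_signAdj_add_inv_eq_neg_one a (η := η)
      (by rw [hηm]; exact_mod_cast h1)
    obtain ⟨b', θ', hθ', hθ'n⟩ := exists_signAdj_add_inv_eq_neg_one b (η := θ)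
      (by rw [hθn]; exact_mod_cast hmn ▸ h1)
    obtain ⟨e₁, e₂⟩ := hη'.mul_eq_and_mul_inv_eq
    obtain ⟨f₁, f₂⟩ := hθ'.mul_eq_and_mul_inv_eq
    exact ⟨a', b', η', θ', hη', hθ', isPrimitiveRoot_three_of_add_inv_eq_neg_one hη'm,
      eq_inv_and_eq_of_add_inv_eq_neg_one hq (by rw [e₁, f₁, h₁]) (by rw [e₂, f₂, h₂]) hη'm hθ'n⟩
  · left
    exact ⟨eq_one_or_eq_neg_one_of_add_inv_sq_eq_four hη.ne_zero
        (by rw [hηm]; exact_mod_cast h4),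
      eq_one_or_eq_neg_one_of_add_inv_sq_eq_four hθ.ne_zero
        (by rw [hθn]; exact_mod_cast hmn ▸ h4)⟩

end TwoTerms

/-- If `a, b` are non-zero rationals and `η, θ` roots of unity with `aη + bθ ∈ ℚ`, then after
possibly swapping and sign-changing the pairs: either both roots of unity are `±1`, or `η` is a
primitive cube root of unity with `θ = η⁻¹` and `a = b`, or `θ = -η` and `a = b`. -/
theorem rational_combination_of_two_roots_of_unity (a b : ℚ) (ha : a ≠ 0) (hb : b ≠ 0)
    (η θ : ℂ) (hη : IsRootOfUnity η) (hθ : IsRootOfUnity θ)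
    (hrat : ∃ q : ℚ, (a : ℂ) * η + (b : ℂ) * θ = (q : ℂ)) :
    ∃ (a' b' : ℚ) (η' θ' : ℂ), Adjust a b η θ a' b' η' θ' ∧
      (((η' = 1 ∨ η' = -1) ∧ (θ' = 1 ∨ θ' = -1)) ∨
        (IsPrimitiveRoot η' 3 ∧ θ' = η'⁻¹ ∧ a' = b') ∨
        (θ' = -η' ∧ a' = b')) := by
  obtain ⟨q, h₁⟩ := hrat
  have h₂ : (a : ℂ) * η⁻¹ + b * θ⁻¹ = q := by
    simpa [hη.conj_eq_inv, hθ.conj_eq_inv] using congrArg conj h₁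
  rcases eq_or_ne q 0 with rfl | hq
  · push_cast at h₁ h₂
    obtain ⟨b', θ', hθ', hb', hθ'η⟩ :=
      exists_signAdj_eq_neg_of_add_eq_zero hb hη.ne_zero hθ.ne_zero h₁ h₂
    exact ⟨a, b', η, θ', Or.inl ⟨SignAdj.refl a η, hθ'⟩,
      Or.inr (Or.inr ⟨hθ'η, hb'.symm⟩)⟩
  · rcases rational_combination_of_two_roots_of_unity_of_ne_zero ha hb hq hη hθ h₁ h₂ with
      h | ⟨a', b', η', θ', hη', hθ', h⟩
    · exact ⟨a, b, η, θ, Or.inl ⟨SignAdj.refl a η, SignAdj.refl b θ⟩, Or.inl h⟩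
    · exact ⟨a', b', η', θ', Or.inl ⟨hη', hθ'⟩, Or.inr (Or.inl h)⟩
end

section
/- Let a, b be non-zero rational numbers and η, θ roots of unity such that α = aη + bθ generates the field ℚ(√5), i.e., ℚ(α) = ℚ(√5). Then after possibly swapping (a,η) and (b,θ) and possibly replacing (a,η) by (−a,−η) and/or (b,θ) by (−b,−θ): η is a primitive 5th root of unity, θ = η⁻¹, and a = b. -/
/-!
Put `α = a η + b θ` and `ρ = η / θ`. As `ℚ(α) = ℚ(√5)` is real, `α = a η⁻¹ + b θ⁻¹`, whence
`α² = a² + b² + a b (ρ + ρ⁻¹)`: so `ρ` is quadratic over `ℚ(√5)`, and `η`, `θ = α / (a ρ + b)`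
lie in a field of degree at most `4`. The lcm `N` of their orders therefore has `φ(N) ≤ 4`.
If `5 ∤ N`, then `√5 ∈ ℚ(ζ_N)` would make `ζ₅` quadratic over `ℚ(ζ_N)`, against
`φ(5N) = 4 φ(N)`; hence `N ∣ 10`, and after sign changes `η` and `θ` are primitive fifth roots
of unity. Finally `ζ₅ + ζ₅⁻¹` is irrational, as `(2 (ζ₅ + ζ₅⁻¹) + 1)² = 5`, and comparing `α`
with its conjugate forces `θ = η⁻¹` and `a = b`.
-/

open IntermediateField Polynomial Module SubfieldClass

theorem Rat.sq_ne_five (q : ℚ) : q ^ 2 ≠ 5 := fun h =>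
  Rat.isSquare_ofNat_iff.not.2 Nat.prime_five.not_isSquare ⟨q, by rw [← h, sq]⟩

theorem Nat.dvd_ten_of_five_dvd_of_totient_le_four {n : ℕ} (hn : n ≠ 0) (h5 : 5 ∣ n)
    (hφ : n.totient ≤ 4) : n ∣ 10 := by
  obtain ⟨k, rfl⟩ := h5
  have hk : k.totient ≤ 1 := by
    have := Nat.totient_super_multiplicative 5 k
    rw [Nat.totient_prime Nat.prime_five] at this
    omega
  exact Nat.mul_dvd_mul_left 5 (Nat.dvd_two_of_totient_le_one (by omega) hk)

section Quadratic

variable {F L : Type*} [Field F] [Field L] [Algebra F L]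

theorem isIntegral_of_sq_add_mul_add_eq_zero {x : L} {p q : F}
    (hx : x ^ 2 + algebraMap F L p * x + algebraMap F L q = 0) : IsIntegral F x :=
  ⟨X ^ 2 + C p * X + C q, by monicity!, by simp [hx]⟩

theorem IntermediateField.finrank_adjoin_le_two {x : L} {p q : F}
    (hx : x ^ 2 + algebraMap F L p * x + algebraMap F L q = 0) : finrank F F⟮x⟯ ≤ 2 := by
  rw [adjoin.finrank (isIntegral_of_sq_add_mul_add_eq_zero hx)]
  calc (minpoly F x).natDegree ≤ (X ^ 2 + C p * X + C q).natDegree :=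
        natDegree_le_natDegree (minpoly.min F x (by monicity!) (by simp [hx]))
    _ = 2 := by compute_degree!

theorem IntermediateField.exists_finrank_le_two_mul_of_add_inv_mem (K : IntermediateField F L)
    [FiniteDimensional F K] {x : L} (hx0 : x ≠ 0) (hxK : x + x⁻¹ ∈ K) :
    ∃ E : IntermediateField F L, FiniteDimensional F E ∧ finrank F E ≤ 2 * finrank F K ∧
      K ≤ E ∧ x ∈ E := by
  have hx : x ^ 2 + algebraMap K L ⟨-(x + x⁻¹), neg_mem hxK⟩ * x + algebraMap K L 1 = 0 := by
    simp only [IntermediateField.algebraMap_apply, map_one]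
    field_simp
    ring
  have := adjoin.finiteDimensional (isIntegral_of_sq_add_mul_add_eq_zero hx)
  have := Module.Free.of_divisionRing K K⟮x⟯
  refine ⟨K⟮x⟯.restrictScalars F, (Module.Finite.trans K K⟮x⟯ : Module.Finite F K⟮x⟯), ?_, ?_,
    mem_adjoin_simple_self K x⟩
  · calc finrank F K⟮x⟯ = finrank F K * finrank K K⟮x⟯ := (finrank_mul_finrank F K _).symm
      _ ≤ 2 * finrank F K := by
        rw [mul_comm]; exact Nat.mul_le_mul_right _ (finrank_adjoin_le_two hx)
  · rw [restrictScalars_adjoin]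
    exact fun y hy => subset_adjoin F _ (Or.inl hy)

theorem IntermediateField.mem_bot_of_sq_eq_one {x : L} (hx : x ^ 2 = 1) :
    x ∈ (⊥ : IntermediateField F L) := by
  rcases sq_eq_one_iff.1 hx with rfl | rfl
  · exact one_mem ⊥
  · exact neg_mem (one_mem ⊥)

end Quadratic

namespace IsPrimitiveRoot

variable {K : Type*} [Field K] {u : K}

theorem mem_adjoin_of_pow_eq_one {F : Type*} [Field F] [Algebra F K] {x : K} {N : ℕ} [NeZero N]
    (hu : IsPrimitiveRoot u N) (hx : x ^ N = 1) : x ∈ F⟮u⟯ := by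
  obtain ⟨i, -, rfl⟩ := hu.eq_pow_of_pow_eq_one hx
  exact pow_mem (mem_adjoin_simple_self F u) i

theorem two_mul_add_inv_add_one_sq (hu : IsPrimitiveRoot u 5) : (2 * (u + u⁻¹) + 1) ^ 2 = 5 := by
  have h := hu.geom_sum_eq_zero (by norm_num)
  simp only [Finset.sum_range_succ, Finset.sum_range_zero] at h
  have hu0 : u ≠ 0 := hu.ne_zero (by norm_num)
  field_simp
  linear_combination 4 * h

variable [CharZero K]

theorem finrank_adjoin_eq_totient {N : ℕ} (hN : 0 < N) (hu : IsPrimitiveRoot u N) :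
    finrank ℚ ℚ⟮u⟯ = N.totient := by
  rw [adjoin.finrank (hu.isIntegral hN).tower_top, ← cyclotomic_eq_minpoly_rat hu hN,
    natDegree_cyclotomic]

theorem add_inv_ne_ratCast (hu : IsPrimitiveRoot u 5) (q : ℚ) : u + u⁻¹ ≠ q := by
  intro h
  apply Rat.sq_ne_five (2 * q + 1)
  have := hu.two_mul_add_inv_add_one_sq
  rw [h] at this
  exact_mod_cast this

theorem add_inv_mem_of_sq_eq_five {F : Type*} [Field F] [Algebra F K] {E : IntermediateField F K}
    (hu : IsPrimitiveRoot u 5) {s : K} (hs : s ^ 2 = 5) (hsE : s ∈ E) : u + u⁻¹ ∈ E := by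
  have two_mem : (2 : K) ∈ E := ofNat_mem E 2
  rcases sq_eq_sq_iff_eq_or_eq_neg.1 (hu.two_mul_add_inv_add_one_sq.trans hs.symm) with h | h
  · rw [show u + u⁻¹ = (s - 1) / 2 by linear_combination h / 2]
    exact div_mem (sub_mem hsE (one_mem E)) two_mem
  · rw [show u + u⁻¹ = (-s - 1) / 2 by linear_combination h / 2]
    exact div_mem (sub_mem (neg_mem hsE) (one_mem E)) two_mem

theorem eq_inv_and_eq_of_add_eq_add_inv {v : K} (hu : IsPrimitiveRoot u 5)
    (hv : IsPrimitiveRoot v 5) {a b : ℚ} (hreal : a * u + b * v = a * u⁻¹ + b * v⁻¹)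
    (h0 : a * u + b * v ≠ 0) : v = u⁻¹ ∧ a = b := by
  have h5 : u ^ 5 = 1 := hu.pow_eq_one
  have hinv : u⁻¹ = u ^ 4 := inv_eq_of_mul_eq_one_right (by linear_combination h5)
  have hd : u - u ^ 4 ≠ 0 := by
    intro h
    have h3 : u * (u ^ 3 - 1) = 0 := by linear_combination -h
    have := sub_eq_zero.1 ((mul_eq_zero.1 h3).resolve_left (hu.ne_zero (by norm_num)))
    exact absurd ((hu.pow_eq_one_iff_dvd 3).1 this) (by norm_num)
  have hindep (c d : ℚ) (h : c + d * (u + u⁻¹) = (0 : K)) : c = 0 ∧ d = 0 := by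
    have hd0 : d = 0 := by
      by_contra hd0
      exact hu.add_inv_ne_ratCast (-c / d) (by
        push_cast; rw [eq_div_iff (by exact_mod_cast hd0)]; linear_combination h)
    subst hd0
    exact ⟨by exact_mod_cast (by simpa using h : (c : K) = 0), rfl⟩
  -- For `v = u ^ 2, u ^ 3` the relation factors as `(u - u⁻¹) * (a ± b * (u + u⁻¹)) = 0`.
  obtain ⟨k, hk, rfl⟩ := hu.eq_pow_of_pow_eq_one hv.pow_eq_one
  rw [← inv_pow, hinv] at hreal
  interval_cases k
  · exact absurd (pow_zero u) (hv.ne_one (by norm_num))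
  · have : ((a : K) + b) * (u - u ^ 4) = 0 := by linear_combination hreal
    refine absurd ?_ h0
    linear_combination u * (mul_eq_zero.1 this).resolve_right hd
  · have : (u - u ^ 4) * (a + b * (u + u⁻¹)) = 0 := by rw [hinv]; linear_combination hreal
    obtain ⟨rfl, rfl⟩ := hindep a b ((mul_eq_zero.1 this).resolve_left hd)
    simp at h0
  · have : (u - u ^ 4) * (a + (-b : ℚ) * (u + u⁻¹)) = 0 := by
      rw [hinv]; push_cast
      linear_combination hreal + (b * u ^ 3 + b * u ^ 2 * (u ^ 5 + 1)) * h5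
    obtain ⟨rfl, hb⟩ := hindep a (-b) ((mul_eq_zero.1 this).resolve_left hd)
    simp [neg_eq_zero.1 hb] at h0
  · have : ((a : K) - b) * (u - u ^ 4) = 0 := by
      linear_combination hreal + b * u * (u ^ 10 + u ^ 5 + 1) * h5
    exact ⟨hinv.symm, by exact_mod_cast sub_eq_zero.1 ((mul_eq_zero.1 this).resolve_right hd)⟩

end IsPrimitiveRoot

theorem IsPrimitiveRoot.notMem_adjoin_of_sq_eq_five {z : ℂ} {N : ℕ} (hz : IsPrimitiveRoot z N)
    (hN : 0 < N) (h5 : ¬ 5 ∣ N) {s : ℂ} (hs : s ^ 2 = 5) : s ∉ ℚ⟮z⟯ := by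
  intro hsK
  have : FiniteDimensional ℚ ℚ⟮z⟯ := adjoin.finiteDimensional (hz.isIntegral hN).tower_top
  have hw := Complex.isPrimitiveRoot_exp 5 (by norm_num)
  obtain ⟨E, _, hE, hKE, hwE⟩ := ℚ⟮z⟯.exists_finrank_le_two_mul_of_add_inv_mem
    (hw.ne_zero (by norm_num)) (hw.add_inv_mem_of_sq_eq_five hs hsK)
  have hcop : N.Coprime 5 := ((Nat.Prime.coprime_iff_not_dvd Nat.prime_five).2 h5).symm
  have hzE : IsPrimitiveRoot (⟨z, hKE (mem_adjoin_simple_self ℚ z)⟩ : E) N :=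
    coe_submonoidClass_iff.1 hz
  have hwE : IsPrimitiveRoot (⟨_, hwE⟩ : E) 5 := coe_submonoidClass_iff.1 hw
  have := hzE.lcm_totient_le_finrank hwE
    (cyclotomic.irreducible_rat (Nat.lcm_pos hN (by norm_num)))
  rw [hcop.lcm_eq_mul, Nat.totient_mul hcop, Nat.totient_prime Nat.prime_five] at this
  have := hz.finrank_adjoin_eq_totient hN
  have := Nat.totient_pos.2 hN
  omega

section RationalCombination

variable {L : Type*} [Field L] [CharZero L]

theorem notMem_bot_of_sq_eq_five_mem_adjoin {s x : L} (hs : s ^ 2 = 5) (hsx : s ∈ ℚ⟮x⟯) :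
    x ∉ (⊥ : IntermediateField ℚ L) := fun h => by
  obtain ⟨q, rfl⟩ := mem_bot.1 (adjoin_simple_eq_bot_iff.2 h ▸ hsx)
  rw [eq_ratCast] at hs
  exact Rat.sq_ne_five q (by exact_mod_cast hs)

theorem sq_ne_one_of_add_eq_add_inv {a b : ℚ} (hb : b ≠ 0) {η θ : L} (hθ0 : θ ≠ 0)
    (hreal : a * η + b * θ = a * η⁻¹ + b * θ⁻¹)
    (hirr : a * η + b * θ ∉ (⊥ : IntermediateField ℚ L)) : η ^ 2 ≠ 1 := by
  intro hη
  have hηinv : η⁻¹ = η := inv_eq_of_mul_eq_one_right (by rw [← sq, hη])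
  have hθinv : θ⁻¹ = θ := by
    rw [hηinv, add_right_inj] at hreal
    exact (mul_left_cancel₀ (Rat.cast_ne_zero.2 hb) hreal).symm
  have hθ : θ ^ 2 = 1 := by rw [sq]; nth_rw 2 [← hθinv]; exact mul_inv_cancel₀ hθ0
  exact hirr (add_mem (mul_mem (ratCast_mem _ a) (mem_bot_of_sq_eq_one hη))
    (mul_mem (ratCast_mem _ b) (mem_bot_of_sq_eq_one hθ)))

theorem exists_finrank_le_two_mul_mem_of_add_mem {F : IntermediateField ℚ L}
    [FiniteDimensional ℚ F] {a b : ℚ} (ha : a ≠ 0) (hb : b ≠ 0) {η θ : L} (hη0 : η ≠ 0)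
    (hθ0 : θ ≠ 0) (hreal : a * η + b * θ = a * η⁻¹ + b * θ⁻¹) (hα0 : a * η + b * θ ≠ 0)
    (hαF : a * η + b * θ ∈ F) :
    ∃ E : IntermediateField ℚ L, FiniteDimensional ℚ E ∧ finrank ℚ E ≤ 2 * finrank ℚ F ∧
      η ∈ E ∧ θ ∈ E := by
  set α := (a : L) * η + b * θ
  have hρ : η / θ + (η / θ)⁻¹ = (α ^ 2 - a ^ 2 - b ^ 2) / (a * b) := by
    rw [eq_div_iff (by simp [ha, hb]), sq]
    nth_rw 2 [hreal]
    field_simp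
    ring
  obtain ⟨E, hEfin, hE, hFE, hρE⟩ := F.exists_finrank_le_two_mul_of_add_inv_mem
    (div_ne_zero hη0 hθ0) (hρ ▸ div_mem (sub_mem (sub_mem (pow_mem hαF 2)
      (pow_mem (ratCast_mem F a) 2)) (pow_mem (ratCast_mem F b) 2))
      (mul_mem (ratCast_mem F a) (ratCast_mem F b)))
  have hα : (a * (η / θ) + b) * θ = α := by rw [add_mul, mul_assoc, div_mul_cancel₀ η hθ0]
  have hθE : θ ∈ E := by
    rw [← mul_div_cancel_left₀ θ (left_ne_zero_of_mul (hα ▸ hα0)), hα]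
    exact div_mem (hFE hαF) (add_mem (mul_mem (ratCast_mem E a) hρE) (ratCast_mem E b))
  refine ⟨E, hEfin, hE, ?_, hθE⟩
  rw [← div_mul_cancel₀ η hθ0]
  exact mul_mem hρE hθE

end RationalCombination

namespace IsRootOfUnity

variable {z : ℂ}

theorem isOfFinOrder (hz : IsRootOfUnity z) : IsOfFinOrder z :=
  isOfFinOrder_iff_pow_eq_one.2 hz

theorem ne_zero_s4 (hz : IsRootOfUnity z) : z ≠ 0 := by
  rintro rfl
  obtain ⟨n, hn, h⟩ := hz
  simp [hn.ne'] at h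

theorem conj_eq_inv_s4 (hz : IsRootOfUnity z) : starRingEnd ℂ z = z⁻¹ := by
  obtain ⟨n, hn, h⟩ := hz
  exact (Complex.inv_eq_conj (Complex.norm_eq_one_of_pow_eq_one h hn.ne')).symm

end IsRootOfUnity

namespace SignAdj

variable {a a' : ℚ} {x x' : ℂ}

theorem mul_eq (h : SignAdj a x a' x') : (a' : ℂ) * x' = a * x := by
  rcases h with ⟨rfl, rfl⟩ | ⟨rfl, rfl⟩ <;> push_cast <;> ring

theorem mul_inv_eq (h : SignAdj a x a' x') : (a' : ℂ) * x'⁻¹ = a * x⁻¹ := by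
  rcases h with ⟨rfl, rfl⟩ | ⟨rfl, rfl⟩ <;> push_cast <;> ring

end SignAdj

theorem exists_signAdj_isPrimitiveRoot_five (a : ℚ) {x : ℂ} (h10 : x ^ 10 = 1)
    (h2 : x ^ 2 ≠ 1) : ∃ a' x', SignAdj a x a' x' ∧ IsPrimitiveRoot x' 5 := by
  have : Fact (Nat.Prime 5) := ⟨Nat.prime_five⟩
  have prim (y : ℂ) (h5 : y ^ 5 = 1) (h2 : y ^ 2 ≠ 1) : IsPrimitiveRoot y 5 :=
    IsPrimitiveRoot.iff_orderOf.2 (orderOf_eq_prime h5 (by rintro rfl; simp at h2))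
  rcases mul_eq_zero.1 (show (x ^ 5 - 1) * (x ^ 5 + 1) = 0 by linear_combination h10) with h | h
  · exact ⟨a, x, Or.inl ⟨rfl, rfl⟩, prim x (sub_eq_zero.1 h) h2⟩
  · exact ⟨-a, -x, Or.inr ⟨rfl, rfl⟩, prim (-x) (by linear_combination -h) (by rwa [neg_sq])⟩

theorem conj_eq_self_of_mem_adjoin_ofReal {r : ℝ} {x : ℂ} (hx : x ∈ ℚ⟮(r : ℂ)⟯) :
    starRingEnd ℂ x = x := by
  induction hx using IntermediateField.adjoin_induction with
  | mem x hx => rw [Set.mem_singleton_iff.1 hx, Complex.conj_ofReal]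
  | algebraMap q => exact map_ratCast _ q
  | add x y _ _ hx hy => rw [map_add, hx, hy]
  | inv x _ hx => rw [map_inv₀, hx]
  | mul x y _ _ hx hy => rw [map_mul, hx, hy]

theorem pow_ten_eq_one_of_finrank_le_four {E : IntermediateField ℚ ℂ} [FiniteDimensional ℚ E]
    (hE : finrank ℚ E ≤ 4) {a b : ℚ} {η θ : ℂ} (hη : IsRootOfUnity η) (hθ : IsRootOfUnity θ)
    (hηE : η ∈ E) (hθE : θ ∈ E) {s : ℂ} (hs : s ^ 2 = 5) (hsα : s ∈ ℚ⟮(a : ℂ) * η + b * θ⟯) :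
    η ^ 10 = 1 ∧ θ ^ 10 = 1 := by
  set N := Nat.lcm (orderOf η) (orderOf θ)
  have hN : 0 < N := Nat.lcm_pos hη.isOfFinOrder.orderOf_pos hθ.isOfFinOrder.orderOf_pos
  have hηN : η ^ N = 1 := orderOf_dvd_iff_pow_eq_one.1 (Nat.dvd_lcm_left _ _)
  have hθN : θ ^ N = 1 := orderOf_dvd_iff_pow_eq_one.1 (Nat.dvd_lcm_right _ _)
  have hφ : N.totient ≤ 4 := by
    have hη' : IsPrimitiveRoot (⟨η, hηE⟩ : E) (orderOf η) :=
      IsPrimitiveRoot.coe_submonoidClass_iff.1 (IsPrimitiveRoot.orderOf η)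
    have hθ' : IsPrimitiveRoot (⟨θ, hθE⟩ : E) (orderOf θ) :=
      IsPrimitiveRoot.coe_submonoidClass_iff.1 (IsPrimitiveRoot.orderOf θ)
    exact (hη'.lcm_totient_le_finrank hθ' (cyclotomic.irreducible_rat hN)).trans hE
  have h5 : 5 ∣ N := by
    by_contra h5
    have : NeZero N := ⟨hN.ne'⟩
    have hζ := Complex.isPrimitiveRoot_exp N hN.ne'
    refine hζ.notMem_adjoin_of_sq_eq_five hN h5 hs (adjoin_simple_le_iff.2 ?_ hsα)
    exact add_mem (mul_mem (ratCast_mem _ a) (hζ.mem_adjoin_of_pow_eq_one hηN))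
      (mul_mem (ratCast_mem _ b) (hζ.mem_adjoin_of_pow_eq_one hθN))
  have h10 := Nat.dvd_ten_of_five_dvd_of_totient_le_four hN.ne' h5 hφ
  exact ⟨orderOf_dvd_iff_pow_eq_one.1 ((Nat.dvd_lcm_left _ _).trans h10),
    orderOf_dvd_iff_pow_eq_one.1 ((Nat.dvd_lcm_right _ _).trans h10)⟩

/-- If `a, b` are non-zero rationals and `η, θ` roots of unity with `ℚ(aη + bθ) = ℚ(√5)`, then
after possibly swapping and sign-changing the pairs: `η` is a primitive 5th root of unity,
`θ = η⁻¹`, and `a = b`. -/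
theorem combination_generating_sqrt5 (a b : ℚ) (ha : a ≠ 0) (hb : b ≠ 0)
    (η θ : ℂ) (hη : IsRootOfUnity η) (hθ : IsRootOfUnity θ)
    (hfield : IntermediateField.adjoin ℚ {(a : ℂ) * η + (b : ℂ) * θ} =
      IntermediateField.adjoin ℚ {((Real.sqrt 5 : ℝ) : ℂ)}) :
    ∃ (a' b' : ℚ) (η' θ' : ℂ), Adjust a b η θ a' b' η' θ' ∧
      IsPrimitiveRoot η' 5 ∧ θ' = η'⁻¹ ∧ a' = b' := by
  have hs : ((√5 : ℝ) : ℂ) ^ 2 = 5 := by norm_cast; simp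
  have hs' : ((√5 : ℝ) : ℂ) ^ 2 + algebraMap ℚ ℂ 0 * (√5 : ℝ) + algebraMap ℚ ℂ (-5) = 0 := by
    simp [hs]
  have : FiniteDimensional ℚ ℚ⟮((√5 : ℝ) : ℂ)⟯ :=
    adjoin.finiteDimensional (isIntegral_of_sq_add_mul_add_eq_zero hs')
  have hsα : ((√5 : ℝ) : ℂ) ∈ ℚ⟮(a : ℂ) * η + b * θ⟯ := hfield ▸ mem_adjoin_simple_self ℚ _
  have hαs : (a : ℂ) * η + b * θ ∈ ℚ⟮((√5 : ℝ) : ℂ)⟯ := hfield ▸ mem_adjoin_simple_self ℚ _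
  have hirr := notMem_bot_of_sq_eq_five_mem_adjoin hs hsα
  have hα0 : (a : ℂ) * η + b * θ ≠ 0 := fun h => hirr (h ▸ zero_mem ⊥)
  have hreal : (a : ℂ) * η + b * θ = a * η⁻¹ + b * θ⁻¹ := by
    simpa [hη.conj_eq_inv_s4, hθ.conj_eq_inv_s4] using (conj_eq_self_of_mem_adjoin_ofReal hαs).symm
  obtain ⟨E, _, hE, hηE, hθE⟩ :=
    exists_finrank_le_two_mul_mem_of_add_mem ha hb hη.ne_zero_s4 hθ.ne_zero_s4 hreal hα0 hαs
  obtain ⟨hη10, hθ10⟩ := pow_ten_eq_one_of_finrank_le_four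
    (hE.trans (by linarith [finrank_adjoin_le_two hs'])) hη hθ hηE hθE hs hsα
  obtain ⟨a', η', hηa', hη'⟩ := exists_signAdj_isPrimitiveRoot_five a hη10
    (sq_ne_one_of_add_eq_add_inv hb hθ.ne_zero_s4 hreal hirr)
  obtain ⟨b', θ', hθb', hθ'⟩ := exists_signAdj_isPrimitiveRoot_five b hθ10
    (sq_ne_one_of_add_eq_add_inv ha hη.ne_zero_s4 (by rw [add_comm, hreal, add_comm])
      (by rwa [add_comm]))
  obtain ⟨hinv, hab⟩ := hη'.eq_inv_and_eq_of_add_eq_add_inv hθ' (a := a') (b := b')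
    (by rw [hηa'.mul_eq, hθb'.mul_eq, hηa'.mul_inv_eq, hθb'.mul_inv_eq, hreal])
    (by rwa [hηa'.mul_eq, hθb'.mul_eq])
  exact ⟨a', b', η', θ', Or.inl ⟨hηa', hθb'⟩, hη', hinv, hab⟩
end

section
/- Let n be a positive integer such that the unit group (ℤ/nℤ)^× is either 2-elementary (every element has order dividing 2) or isomorphic to ℤ/4ℤ times a 2-elementary group. Then n divides 48 or n divides 120. -/
section Aux

lemma aux_pi_sq_eq_one {k : ℕ} (x : Multiplicative (Fin k → ZMod 2)) : x ^ 2 = 1 := by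
  have h2 : ∀ a : ZMod 2, (2 : ℕ) • a = 0 := by decide
  rw [← ofAdd_toAdd x, ← ofAdd_nsmul]
  have : (2 : ℕ) • x.toAdd = 0 := by
    funext i
    simpa [Pi.smul_apply] using h2 (x.toAdd i)
  rw [this, ofAdd_zero]

lemma aux_pi_pow_four_eq_one {k : ℕ} (x : Multiplicative (Fin k → ZMod 2)) : x ^ 4 = 1 := by
  rw [(by norm_num : (4:ℕ) = 2*2), pow_mul, aux_pi_sq_eq_one]

lemma aux_prod_pow_four_eq_one {k : ℕ} (x : Multiplicative (ZMod 4 × (Fin k → ZMod 2))) :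
    x ^ 4 = 1 := by
  have h4 : ∀ a : ZMod 4, (4 : ℕ) • a = 0 := by decide
  have h2 : ∀ a : ZMod 2, (4 : ℕ) • a = 0 := by decide
  rw [← ofAdd_toAdd x, ← ofAdd_nsmul]
  have : (4 : ℕ) • x.toAdd = 0 := by
    ext
    · simpa using h4 x.toAdd.1
    · simpa [Pi.smul_apply] using h2 _
  rw [this, ofAdd_zero]

lemma aux_prod_sq_cases {k : ℕ} (x : Multiplicative (ZMod 4 × (Fin k → ZMod 2))) :
    x ^ 2 = 1 ∨ x ^ 2 = Multiplicative.ofAdd ((2 : ZMod 4), (0 : Fin k → ZMod 2)) := by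
  have h2 : ∀ a : ZMod 4, (2 : ℕ) • a = 0 ∨ (2 : ℕ) • a = 2 := by decide
  have hz : ∀ a : ZMod 2, (2 : ℕ) • a = 0 := by decide
  rw [← ofAdd_toAdd x, ← ofAdd_nsmul]
  have hpi : (2 : ℕ) • x.toAdd.2 = 0 := by
    funext i; simpa [Pi.smul_apply] using hz (x.toAdd.2 i)
  have hsm : (2 : ℕ) • x.toAdd = ((2 : ℕ) • x.toAdd.1, (0 : Fin k → ZMod 2)) := by
    ext
    · rfl
    · rw [← hpi]; rfl
  rw [hsm]
  rcases h2 x.toAdd.1 with h | h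
  · left; rw [h]; rfl
  · right; rw [h]

lemma aux_unit_sq_ne {m : ℕ} (a b : ℕ) (ha : Nat.Coprime a m) (hb : Nat.Coprime b m)
    (hne : ((a : ZMod m)) ^ 2 ≠ (b : ZMod m) ^ 2) :
    (ZMod.unitOfCoprime a ha) ^ 2 ≠ (ZMod.unitOfCoprime b hb) ^ 2 := by
  intro hq
  apply hne
  have := congrArg Units.val hq
  rwa [Units.val_pow_eq_pow_val, Units.val_pow_eq_pow_val, ZMod.coe_unitOfCoprime,
    ZMod.coe_unitOfCoprime] at this

lemma aux_unit_sq_ne_one {m : ℕ} (a : ℕ) (ha : Nat.Coprime a m)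
    (hne : ((a : ZMod m)) ^ 2 ≠ 1) :
    (ZMod.unitOfCoprime a ha) ^ 2 ≠ 1 := by
  intro hq
  apply hne
  have := congrArg Units.val hq
  rwa [Units.val_pow_eq_pow_val, ZMod.coe_unitOfCoprime, Units.val_one] at this

lemma aux_exclude {n : ℕ} (x y : (ZMod n)ˣ)
    (hx : x ^ 2 ≠ 1) (hy : y ^ 2 ≠ 1) (hxy : x ^ 2 ≠ y ^ 2)
    (h : (∃ k : ℕ, Nonempty ((ZMod n)ˣ ≃* Multiplicative (Fin k → ZMod 2))) ∨
      (∃ k : ℕ, Nonempty ((ZMod n)ˣ ≃* Multiplicative (ZMod 4 × (Fin k → ZMod 2))))) :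
    False := by
  rcases h with ⟨k, ⟨e⟩⟩ | ⟨k, ⟨e⟩⟩
  · apply hx
    apply e.injective
    rw [map_pow, map_one]
    exact aux_pi_sq_eq_one _
  · have cx := aux_prod_sq_cases (e x)
    have cy := aux_prod_sq_cases (e y)
    rw [← map_pow] at cx cy
    rcases cx with cx | cx
    · exact hx (e.injective (by rw [cx, map_one]))
    rcases cy with cy | cy
    · exact hy (e.injective (by rw [cy, map_one]))
    exact hxy (e.injective (cx.trans cy.symm))

end Aux

set_option maxRecDepth 20000 in
/-- If the unit group `(ℤ/nℤ)ˣ` is 2-elementary, or is `ℤ/4ℤ` times a 2-elementary group,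
then `n` divides 48 or `n` divides 120. -/
theorem units_zmod_two_elementary_or_four (n : ℕ) (hn : 0 < n)
    (h : (∃ k : ℕ, Nonempty ((ZMod n)ˣ ≃* Multiplicative (Fin k → ZMod 2))) ∨
      (∃ k : ℕ, Nonempty ((ZMod n)ˣ ≃* Multiplicative (ZMod 4 × (Fin k → ZMod 2))))) :
    n ∣ 48 ∨ n ∣ 120 := by
  haveI : NeZero n := ⟨hn.ne'⟩
  have key : ∀ u : (ZMod n)ˣ, u ^ 4 = 1 := by
    rcases h with ⟨k, ⟨e⟩⟩ | ⟨k, ⟨e⟩⟩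
    · intro u; apply e.injective; rw [map_pow, map_one]; exact aux_pi_pow_four_eq_one _
    · intro u; apply e.injective; rw [map_pow, map_one]; exact aux_prod_pow_four_eq_one _
  have keyd : ∀ d : ℕ, d ∣ n → ∀ v : (ZMod d)ˣ, v ^ 4 = 1 := by
    intro d hd v
    obtain ⟨u, rfl⟩ := ZMod.unitsMap_surjective hd v
    rw [← map_pow, key u, map_one]
  have hp : ∀ p : ℕ, p.Prime → p ∣ n → p = 2 ∨ p = 3 ∨ p = 5 := by
    intro p pp hpn
    haveI : Fact p.Prime := ⟨pp⟩
    obtain ⟨g, hg⟩ := IsCyclic.exists_generator (α := (ZMod p)ˣ)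
    have h1 : orderOf g ∣ 4 := orderOf_dvd_of_pow_eq_one (keyd p hpn g)
    have h2 : orderOf g = p - 1 := by
      rw [orderOf_eq_card_of_forall_mem_zpowers hg, Nat.card_eq_fintype_card,
        ZMod.card_units_eq_totient, Nat.totient_prime pp]
    rw [h2] at h1
    have hple : p - 1 ≤ 4 := Nat.le_of_dvd (by norm_num) h1
    have h2le : 2 ≤ p := pp.two_le
    have h5le : p ≤ 5 := by omega
    interval_cases p
    · exact Or.inl rfl
    · exact Or.inr (Or.inl rfl)
    · exact absurd pp (by norm_num)
    · exact Or.inr (Or.inr rfl)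
  have hbad : ∀ d : ℕ, d ∣ n → ∀ (a : ℕ) (ha : Nat.Coprime a d),
      ((a : ZMod d)) ^ 4 = 1 := by
    intro d hd a ha
    have := keyd d hd (ZMod.unitOfCoprime a ha)
    have h2 := congrArg Units.val this
    rwa [Units.val_pow_eq_pow_val, ZMod.coe_unitOfCoprime, Units.val_one] at h2
  have h32 : ¬ (32 ∣ n) := by
    intro hd
    have := hbad 32 hd 3 (by decide)
    exact absurd this (by decide)
  have h9 : ¬ (9 ∣ n) := by
    intro hd
    have := hbad 9 hd 2 (by decide)
    exact absurd this (by decide)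
  have h25 : ¬ (25 ∣ n) := by
    intro hd
    have := hbad 25 hd 2 (by decide)
    exact absurd this (by decide)
  have h240 : n ∣ 240 := by
    rw [Nat.dvd_iff_prime_pow_dvd_dvd]
    intro p k hp' hpk
    have pp : p.Prime := hp'
    rcases Nat.eq_zero_or_pos k with rfl | hk
    · simp
    have hpn : p ∣ n := dvd_trans (dvd_pow_self p hk.ne') hpk
    rcases hp p pp hpn with rfl | rfl | rfl
    · have hk4 : k ≤ 4 := by
        by_contra hk5
        exact h32 (dvd_trans (pow_dvd_pow 2 (by omega : 5 ≤ k)) hpk)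
      exact dvd_trans (pow_dvd_pow 2 hk4) (by norm_num)
    · have hk1 : k ≤ 1 := by
        by_contra hk2
        exact h9 (dvd_trans (pow_dvd_pow 3 (by omega : 2 ≤ k)) hpk)
      exact dvd_trans (pow_dvd_pow 3 hk1) (by norm_num)
    · have hk1 : k ≤ 1 := by
        by_contra hk2
        exact h25 (dvd_trans (pow_dvd_pow 5 (by omega : 2 ≤ k)) hpk)
      exact dvd_trans (pow_dvd_pow 5 hk1) (by norm_num)
  have hle : n ≤ 240 := Nat.le_of_dvd (by norm_num) h240
  have hcases : n ∣ 48 ∨ n ∣ 120 ∨ n = 80 ∨ n = 240 := by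
    have hdec : ∀ m : ℕ, m ≤ 240 → m ∣ 240 → m ∣ 48 ∨ m ∣ 120 ∨ m = 80 ∨ m = 240 := by decide
    exact hdec n hle h240
  rcases hcases with h48 | h120 | rfl | rfl
  · exact Or.inl h48
  · exact Or.inr h120
  · exact absurd h (fun h => aux_exclude (ZMod.unitOfCoprime 51 (by decide))
      (ZMod.unitOfCoprime 17 (by decide))
      (aux_unit_sq_ne_one 51 (by decide) (by decide))
      (aux_unit_sq_ne_one 17 (by decide) (by decide))
      (aux_unit_sq_ne 51 17 (by decide) (by decide) (by decide)) h)
  · exact absurd h (fun h => aux_exclude (ZMod.unitOfCoprime 211 (by decide))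
      (ZMod.unitOfCoprime 97 (by decide))
      (aux_unit_sq_ne_one 211 (by decide) (by decide))
      (aux_unit_sq_ne_one 97 (by decide) (by decide))
      (aux_unit_sq_ne 211 97 (by decide) (by decide) (by decide)) h)
end

section
/- Every matrix A ∈ GL₂⁺(ℚ) is equivalent to an upper triangular matrix of the form [[a, b], [0, 1]] with a > 0, where a = gcd(A₁₁, A₂₁)²/det(A). Moreover, [[a, b], [0, 1]] is equivalent to [[a', b'], [0, 1]] if and only if a = a' and b ≡ b' (mod ℤ). -/
/-!
Write the first column of `A` as `δ • (u, v)` with `δ = gcd(A₁₁, A₂₁)` and `u, v` coprime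
integers. A Bézout matrix `[[x, y], [-v, u]] ∈ SL₂(ℤ)` turns it into `(δ, 0)`, so `B A` is upper
triangular with diagonal `δ, det A / δ`; dividing by the lower diagonal entry gives the normal form
with `a = δ² / det A`. Conversely, an equivalence between two normal forms is forced by the
`(2,1)` entry to be upper triangular with diagonal `±1`, hence `a = a'` and `b' = b ± B₁₂`.
-/

/-- The gcd of two rationals: the non-negative rational `δ` with `aℤ + bℤ = δℤ`. -/
def ratGcd (a b : ℚ) : ℚ :=
  (Int.gcd (a.num * (b.den : ℤ)) (b.num * (a.den : ℤ)) : ℚ) / ((a.den : ℚ) * (b.den : ℚ))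

/-- Two rational matrices are equivalent if `A' = λ B A` for some `B ∈ SL₂(ℤ)`
and non-zero rational `λ`. -/
def MatEquiv (A A' : Matrix (Fin 2) (Fin 2) ℚ) : Prop :=
  ∃ (B : Matrix (Fin 2) (Fin 2) ℤ) (l : ℚ), B.det = 1 ∧ l ≠ 0 ∧
    A' = l • ((B.map (Int.cast : ℤ → ℚ)) * A)

/-- The normalized left content of a matrix `A = [[a,b],[c,d]]`, namely `gcd(a,c)² / det A`. -/
noncomputable def nlc (A : Matrix (Fin 2) (Fin 2) ℚ) : ℚ :=
  (ratGcd (A 0 0) (A 1 0)) ^ 2 / A.det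

lemma Int.exists_isCoprime_eq_gcd_mul {m n : ℤ} (h : m ≠ 0 ∨ n ≠ 0) :
    ∃ u v : ℤ, IsCoprime u v ∧ m = Int.gcd m n * u ∧ n = Int.gcd m n * v := by
  obtain ⟨u, v, huv, hm, hn⟩ := Int.exists_gcd_one (Int.gcd_pos_iff.mpr h)
  exact ⟨u, v, Int.isCoprime_iff_gcd_eq_one.mpr huv, hm.trans (mul_comm _ _),
    hn.trans (mul_comm _ _)⟩

lemma ratGcd_pos {p r : ℚ} (h : p ≠ 0 ∨ r ≠ 0) : 0 < ratGcd p r := by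
  have hnum : p.num * r.den ≠ 0 ∨ r.num * p.den ≠ 0 := by simpa using h
  unfold ratGcd
  have := Int.gcd_pos_iff.mpr hnum
  positivity

lemma Rat.eq_num_mul_den_div (p r : ℚ) : p = (p.num * r.den : ℤ) / ((p.den : ℚ) * r.den) := by
  push_cast
  rw [mul_div_mul_right _ _ (by positivity), Rat.num_div_den]

lemma exists_isCoprime_eq_ratGcd_mul {p r : ℚ} (h : p ≠ 0 ∨ r ≠ 0) :
    ∃ u v : ℤ, IsCoprime u v ∧ p = ratGcd p r * u ∧ r = ratGcd p r * v := by
  have hnum : p.num * r.den ≠ 0 ∨ r.num * p.den ≠ 0 := by simpa using h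
  obtain ⟨u, v, huv, hu, hv⟩ := Int.exists_isCoprime_eq_gcd_mul hnum
  refine ⟨u, v, huv, ?_, ?_⟩
  · refine (Rat.eq_num_mul_den_div p r).trans ?_
    rw [hu, ratGcd]
    push_cast
    ring
  · refine (Rat.eq_num_mul_den_div r p).trans ?_
    rw [hv, ratGcd]
    push_cast
    ring

open Matrix

lemma exists_det_eq_one_mul_eq_upperTriangular (A : Matrix (Fin 2) (Fin 2) ℚ)
    (h : A 0 0 ≠ 0 ∨ A 1 0 ≠ 0) :
    ∃ (B : Matrix (Fin 2) (Fin 2) ℤ) (β γ : ℚ), B.det = 1 ∧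
      B.map Int.cast * A = !![ratGcd (A 0 0) (A 1 0), β; 0, γ] := by
  obtain ⟨u, v, ⟨x, y, hxy⟩, hu, hv⟩ := exists_isCoprime_eq_ratGcd_mul h
  have hxyQ : (x * u + y * v : ℚ) = 1 := by exact_mod_cast hxy
  refine ⟨!![x, y; -v, u], x * A 0 1 + y * A 1 1, -v * A 0 1 + u * A 1 1,
    by simp [det_fin_two, hxy], ?_⟩
  ext i j
  fin_cases i <;> fin_cases j <;>
    simp only [Fin.zero_eta, Fin.isValue, Fin.mk_one, mul_apply, map_apply, of_apply, cons_val',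
      cons_val_fin_one, cons_val_zero, cons_val_one, Fin.sum_univ_two, Int.cast_neg, neg_mul]
  · linear_combination x * hu + y * hv + ratGcd (A 0 0) (A 1 0) * hxyQ
  · linear_combination -v * hu + u * hv

lemma matEquiv_of_mul_eq_upperTriangular {A : Matrix (Fin 2) (Fin 2) ℚ}
    {B : Matrix (Fin 2) (Fin 2) ℤ} {α β γ : ℚ} (hB : B.det = 1) (hγ : γ ≠ 0)
    (h : B.map Int.cast * A = !![α, β; 0, γ]) :
    MatEquiv A !![α / γ, β / γ; 0, 1] := by
  refine ⟨B, γ⁻¹, hB, inv_ne_zero hγ, ?_⟩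
  rw [h]
  ext i j
  fin_cases i <;> fin_cases j <;> simp [hγ, div_eq_inv_mul]

lemma exists_matEquiv_nlc_upperTriangular {A : Matrix (Fin 2) (Fin 2) ℚ} (hA : 0 < A.det) :
    ∃ a b : ℚ, 0 < a ∧ a = nlc A ∧ MatEquiv A !![a, b; 0, 1] := by
  have hcol : A 0 0 ≠ 0 ∨ A 1 0 ≠ 0 := by
    by_contra! h
    simp [det_fin_two, h] at hA
  obtain ⟨B, β, γ, hB, hBA⟩ := exists_det_eq_one_mul_eq_upperTriangular A hcol
  have hδ := ratGcd_pos hcol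
  have hdet : ratGcd (A 0 0) (A 1 0) * γ = A.det := by
    have := congrArg det hBA
    rwa [det_mul, ← Int.cast_det, hB, Int.cast_one, one_mul, det_fin_two_of, mul_zero, sub_zero,
      eq_comm] at this
  have hγ : 0 < γ := pos_of_mul_pos_right (hdet ▸ hA) hδ.le
  refine ⟨_, _, div_pos hδ hγ, ?_, matEquiv_of_mul_eq_upperTriangular hB hγ.ne' hBA⟩
  rw [nlc, ← hdet]
  field_simp

lemma MatEquiv.eq_and_exists_sub_eq_int {a a' b b' : ℚ} (ha : a ≠ 0)
    (h : MatEquiv !![a, b; 0, 1] !![a', b'; 0, 1]) : a = a' ∧ ∃ m : ℤ, b - b' = m := by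
  obtain ⟨B, l, hB, hl, hBl⟩ := h
  have e00 := congrFun (congrFun hBl 0) 0
  have e01 := congrFun (congrFun hBl 0) 1
  have e10 := congrFun (congrFun hBl 1) 0
  have e11 := congrFun (congrFun hBl 1) 1
  simp only [Fin.isValue, of_apply, cons_val', cons_val_zero, cons_val_fin_one, Matrix.smul_apply,
    mul_apply, map_apply, Fin.sum_univ_two, cons_val_one, mul_zero, add_zero, smul_eq_mul, mul_one,
    zero_eq_mul, mul_eq_zero, Int.cast_eq_zero] at e00 e01 e10 e11
  have hB10 : B 1 0 = 0 := (e10.resolve_left hl).resolve_right ha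
  rw [det_fin_two, hB10, mul_zero, sub_zero] at hB
  rcases Int.eq_one_or_neg_one_of_mul_eq_one' hB with ⟨h0, h1⟩ | ⟨h0, h1⟩
  · have hl1 : l = 1 := by simpa [hB10, h1] using e11.symm
    simp only [h0, hl1, Int.cast_one, one_mul] at e00 e01
    exact ⟨e00.symm, -B 0 1, by rw [e01]; push_cast; ring⟩
  · have hl1 : l = -1 := by linarith [show 1 = -l by simpa [hB10, h1] using e11]
    simp only [h0, hl1, Int.cast_neg, Int.cast_one] at e00 e01
    exact ⟨by rw [e00]; ring, B 0 1, by rw [e01]; ring⟩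

lemma matEquiv_of_sub_eq_int (a b b' : ℚ) (m : ℤ) (h : b - b' = m) :
    MatEquiv !![a, b; 0, 1] !![a, b'; 0, 1] := by
  refine ⟨!![1, -m; 0, 1], 1, by simp [det_fin_two], one_ne_zero, ?_⟩
  ext i j
  fin_cases i <;> fin_cases j <;> simp [mul_apply, Fin.sum_univ_two]
  linarith

/-- Every matrix in `GL₂⁺(ℚ)` is equivalent to an upper triangular matrix `[[a,b],[0,1]]` with
`a = nlc A > 0`; and `[[a,b],[0,1]] ∼ [[a',b'],[0,1]]` iff `a = a'` and `b ≡ b' (mod ℤ)`. -/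
theorem triangular_normal_form :
    (∀ A : Matrix (Fin 2) (Fin 2) ℚ, 0 < A.det →
      ∃ a b : ℚ, 0 < a ∧ a = nlc A ∧ MatEquiv A !![a, b; 0, 1]) ∧
    (∀ a a' b b' : ℚ, 0 < a → 0 < a' →
      (MatEquiv !![a, b; 0, 1] !![a', b'; 0, 1] ↔ a = a' ∧ ∃ m : ℤ, b - b' = (m : ℚ))) := by
  refine ⟨fun A hA ↦ exists_matEquiv_nlc_upperTriangular hA, fun a a' b b' ha _ ↦ ⟨?_, ?_⟩⟩
  · exact MatEquiv.eq_and_exists_sub_eq_int ha.ne'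
  · rintro ⟨rfl, m, hm⟩
    exact matEquiv_of_sub_eq_int a b b' m hm
end

section
/- Let A₁, A₂ ∈ GL₂⁺(ℚ) be non-equivalent matrices. Then there exists a matrix B ∈ GL₂⁺(ℚ) such that nlc(A₁B) ≠ nlc(A₂B). -/
/-! If `nlc (A₁ * B) = nlc (A₂ * B)` for every `B` with positive determinant, then
`M = A₂ * A₁⁻¹` satisfies `nlc (M * C) = nlc C` for all such `C`. Taking `C = 1` and `C` the
rotation by a right angle shows that both columns of `M` have a gcd whose square is `det M`.
Hence both columns are integer multiples of one `μ ≠ 0`, so `M = μ • B` with `B` integral, and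
comparing determinants gives `det B = 1`; that is, `A₂ = μ • (B * A₁)`. -/

open Matrix

lemma ratGcd_nonneg (a b : ℚ) : 0 ≤ ratGcd a b := by
  unfold ratGcd; positivity

lemma ratGcd_comm (a b : ℚ) : ratGcd a b = ratGcd b a := by
  rw [ratGcd, ratGcd, Int.gcd_comm, mul_comm (a.den : ℚ)]

lemma exists_eq_ratGcd_mul_left (a b : ℚ) : ∃ m : ℤ, a = ratGcd a b * m := by
  obtain ⟨m, hm⟩ := Int.gcd_dvd_left (a.num * (b.den : ℤ)) (b.num * (a.den : ℤ))
  refine ⟨m, ?_⟩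
  have hm' : (a.num : ℚ) * b.den = (Int.gcd (a.num * b.den) (b.num * a.den) : ℚ) * m := by
    exact_mod_cast hm
  rw [ratGcd, div_mul_eq_mul_div, ← hm', eq_div_iff (by positivity)]
  nth_rewrite 1 [← Rat.num_div_den a]
  field_simp

lemma exists_eq_ratGcd_mul_right (a b : ℚ) : ∃ n : ℤ, b = ratGcd a b * n :=
  ratGcd_comm a b ▸ exists_eq_ratGcd_mul_left b a

lemma nlc_one : nlc 1 = 1 := by
  simp [nlc, ratGcd]

lemma nlc_mul_rotation (M : Matrix (Fin 2) (Fin 2) ℚ) :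
    nlc (M * !![0, -1; 1, 0]) = ratGcd (M 0 1) (M 1 1) ^ 2 / M.det := by
  simp [nlc, det_mul, mul_apply, Fin.sum_univ_two]

lemma nlc_rotation : nlc !![0, -1; 1, 0] = 1 := by
  simpa [ratGcd] using nlc_mul_rotation 1

lemma nlc_eq_one_iff {A : Matrix (Fin 2) (Fin 2) ℚ} :
    nlc A = 1 ↔ A.det ≠ 0 ∧ ratGcd (A 0 0) (A 1 0) ^ 2 = A.det := by
  refine ⟨fun h ↦ ?_, fun ⟨hdet, h⟩ ↦ (div_eq_one_iff_eq hdet).2 h⟩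
  have hdet : A.det ≠ 0 := by
    rintro h0
    simp [nlc, h0] at h
  exact ⟨hdet, (div_eq_one_iff_eq hdet).1 h⟩

lemma MatEquiv.mul_right {A A' : Matrix (Fin 2) (Fin 2) ℚ} (h : MatEquiv A A')
    (C : Matrix (Fin 2) (Fin 2) ℚ) : MatEquiv (A * C) (A' * C) := by
  obtain ⟨B, l, hB, hl, rfl⟩ := h
  exact ⟨B, l, hB, hl, by rw [smul_mul, Matrix.mul_assoc]⟩

lemma exists_int_matrix_of_ratGcd_columns_eq {M : Matrix (Fin 2) (Fin 2) ℚ}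
    (h : ratGcd (M 0 1) (M 1 1) = ratGcd (M 0 0) (M 1 0)) :
    ∃ B : Matrix (Fin 2) (Fin 2) ℤ, M = ratGcd (M 0 0) (M 1 0) • B.map (Int.cast : ℤ → ℚ) := by
  obtain ⟨b₀₀, h₀₀⟩ := exists_eq_ratGcd_mul_left (M 0 0) (M 1 0)
  obtain ⟨b₁₀, h₁₀⟩ := exists_eq_ratGcd_mul_right (M 0 0) (M 1 0)
  obtain ⟨b₀₁, h₀₁⟩ := exists_eq_ratGcd_mul_left (M 0 1) (M 1 1)
  obtain ⟨b₁₁, h₁₁⟩ := exists_eq_ratGcd_mul_right (M 0 1) (M 1 1)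
  rw [h] at h₀₁ h₁₁
  refine ⟨!![b₀₀, b₀₁; b₁₀, b₁₁], ?_⟩
  ext i j
  fin_cases i <;> fin_cases j <;> simpa

lemma matEquiv_one_of_nlc_eq_one {M : Matrix (Fin 2) (Fin 2) ℚ} (h : nlc M = 1)
    (hrot : nlc (M * !![0, -1; 1, 0]) = 1) : MatEquiv 1 M := by
  obtain ⟨hdet, hμ⟩ := nlc_eq_one_iff.1 h
  rw [nlc_mul_rotation, div_eq_one_iff_eq hdet, ← hμ] at hrot
  obtain ⟨B, hB⟩ := exists_int_matrix_of_ratGcd_columns_eq <|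
    (pow_left_inj₀ (ratGcd_nonneg _ _) (ratGcd_nonneg _ _) two_ne_zero).1 hrot
  set μ := ratGcd (M 0 0) (M 1 0)
  have hμ0 : μ ≠ 0 := by
    rintro h0
    rw [h0, zero_pow two_ne_zero] at hμ
    exact hdet hμ.symm
  have hdetM : M.det = μ ^ 2 * (B.det : ℚ) := by
    conv_lhs => rw [hB]
    rw [det_smul, Int.cast_det, Fintype.card_fin]
  have hdetB : μ ^ 2 * (B.det : ℚ) = μ ^ 2 * 1 := by rw [mul_one, ← hdetM, hμ]
  refine ⟨B, μ, ?_, hμ0, by rw [Matrix.mul_one, ← hB]⟩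
  exact_mod_cast mul_left_cancel₀ (pow_ne_zero 2 hμ0) hdetB

theorem nlc_separates_two_general (A₁ A₂ : Matrix (Fin 2) (Fin 2) ℚ)
    (h₁ : 0 < A₁.det) (hne : ¬ MatEquiv A₁ A₂) :
    ∃ B : Matrix (Fin 2) (Fin 2) ℚ, 0 < B.det ∧ nlc (A₁ * B) ≠ nlc (A₂ * B) := by
  by_contra! hcon
  have hA₁ : IsUnit A₁.det := h₁.ne'.isUnit
  set M := A₂ * A₁⁻¹
  have hM : ∀ C : Matrix (Fin 2) (Fin 2) ℚ, 0 < C.det → nlc (M * C) = nlc C := by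
    intro C hC
    have hpos : 0 < (A₁⁻¹ * C).det := by
      rw [det_mul, det_nonsing_inv, Ring.inverse_eq_inv']
      positivity
    have := hcon (A₁⁻¹ * C) hpos
    rwa [← Matrix.mul_assoc, ← Matrix.mul_assoc, mul_nonsing_inv _ hA₁, Matrix.one_mul,
      eq_comm] at this
  have hequiv := (matEquiv_one_of_nlc_eq_one (by simpa [nlc_one] using hM 1 (by simp))
    ((hM _ (by simp)).trans nlc_rotation)).mul_right A₁
  rw [Matrix.one_mul, Matrix.mul_assoc, nonsing_inv_mul _ hA₁, Matrix.mul_one] at hequiv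
  exact hne hequiv

/-- For non-equivalent `A₁, A₂ ∈ GL₂⁺(ℚ)` there is `B ∈ GL₂⁺(ℚ)` with
`nlc(A₁B) ≠ nlc(A₂B)`. -/
theorem nlc_separates_two (A₁ A₂ : Matrix (Fin 2) (Fin 2) ℚ)
    (h₁ : 0 < A₁.det) (h₂ : 0 < A₂.det) (hne : ¬ MatEquiv A₁ A₂) :
    ∃ B : Matrix (Fin 2) (Fin 2) ℚ, 0 < B.det ∧ nlc (A₁ * B) ≠ nlc (A₂ * B) :=
  nlc_separates_two_general A₁ A₂ h₁ hne
end

section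
/- Let A₁, A₂, A₃ ∈ GL₂⁺(ℚ) be pairwise non-equivalent matrices. Then there exists a matrix B ∈ GL₂⁺(ℚ) such that among the three numbers nlc(A₁B), nlc(A₂B), nlc(A₃B), one is strictly bigger than the other two. -/
/-! Write `Aⱼ · adj A₁ = qⱼ • Cⱼ` (`j = 2, 3`) with `qⱼ > 0` and `Cⱼ` an integer matrix whose
entries have gcd `1`. Then `det Cⱼ · qⱼ² = det A₁ · det Aⱼ > 0`, and `det Cⱼ ≠ 1` since otherwise
`Aⱼ = (qⱼ / det A₁) • Cⱼ A₁` would be equivalent to `A₁`.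

For `u ∈ ℤ² ∖ 0` take `B = adj A₁ · [[u₀, -u₁], [u₁, u₀]]`, of determinant `det A₁ · |u|²`.
Its first column `v` has `A₁ v = det A₁ • u` and `Aⱼ v = qⱼ • Cⱼ u`, so
`nlc (A₁ B) = gcd(u)² / |u|²` and `nlc (Aⱼ B) = gcd(Cⱼ u)² / (det Cⱼ · |u|²)`.
Choose `u` by the Chinese remainder theorem so that `Cⱼ u ≢ 0` modulo every prime dividing
`det C₂ · det C₃`. As `gcd(Cⱼ u)` divides `det Cⱼ · gcd(u)` (through `adj Cⱼ`) and is then prime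
to `det Cⱼ`, this forces `gcd(Cⱼ u) = gcd(u)`, so `nlc (Aⱼ B) = nlc (A₁ B) / det Cⱼ < nlc (A₁ B)`.
-/

open Matrix

theorem ratGcd_eq_of_mul_eq {x y : ℚ} {j k e : ℤ} (he : 0 < e) (hj : x * e = j)
    (hk : y * e = k) : ratGcd x y = Int.gcd j k / e := by
  have hx : x.num * y.den * e = j * (x.den * y.den) := by
    rw [← Int.cast_inj (α := ℚ)]
    push_cast
    rw [← Rat.mul_den_eq_num, ← hj]
    ring
  have hy : y.num * x.den * e = k * (x.den * y.den) := by
    rw [← Int.cast_inj (α := ℚ)]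
    push_cast
    rw [← Rat.mul_den_eq_num, ← hk]
    ring
  have key := Int.gcd_mul_right (x.num * y.den) e (y.num * x.den)
  rw [hx, hy, Int.gcd_mul_right, Int.natAbs_mul, Int.natAbs_natCast, Int.natAbs_natCast] at key
  rw [ratGcd, div_eq_div_iff (by positivity) (by positivity), ← Int.natAbs_of_nonneg he.le]
  exact_mod_cast key.symm

theorem ratGcd_mul_intCast {q : ℚ} (hq : 0 < q) (a b : ℤ) :
    ratGcd (q * a) (q * b) = q * Int.gcd a b := by
  rw [ratGcd_eq_of_mul_eq (j := q.num * a) (k := q.num * b) (e := q.den) (by positivity)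
    (by push_cast; rw [← Rat.mul_den_eq_num]; ring) (by push_cast; rw [← Rat.mul_den_eq_num]; ring),
    Int.gcd_mul_left, Nat.cast_mul, Nat.cast_natAbs, abs_of_pos (Rat.num_pos.2 hq),
    ← Rat.mul_den_eq_num]
  push_cast
  field_simp

theorem nlc_smul_map_intCast {q : ℚ} (hq : 0 < q) (M : Matrix (Fin 2) (Fin 2) ℤ) :
    nlc (q • M.map (Int.cast : ℤ → ℚ)) = (Int.gcd (M 0 0) (M 1 0) : ℚ) ^ 2 / M.det := by
  rw [nlc, Matrix.smul_apply, Matrix.smul_apply, map_apply, map_apply, smul_eq_mul, smul_eq_mul,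
    ratGcd_mul_intCast hq, det_smul, Int.cast_det]
  simp only [Fintype.card_fin]
  field_simp

def IsPrimitiveMatrix {m n : Type*} (C : Matrix m n ℤ) : Prop :=
  ∀ p : ℕ, p.Prime → C.map (Int.cast : ℤ → ZMod p) ≠ 0

theorem exists_nat_smul_eq_map_intCast {m n : Type*} [Fintype m] [Fintype n]
    (Q : Matrix m n ℚ) : ∃ d : ℕ, 0 < d ∧ ∃ M : Matrix m n ℤ, (d : ℚ) • Q = M.map Int.cast := by
  set d := ∏ i, ∏ j, (Q i j).den
  have hd : ∀ i j, (Q i j).den ∣ d := fun i j =>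
    (Finset.dvd_prod_of_mem (fun j => (Q i j).den) (Finset.mem_univ j)).trans
      (Finset.dvd_prod_of_mem (fun i => ∏ j, (Q i j).den) (Finset.mem_univ i))
  have hint : ∀ i j, ∃ z : ℤ, (z : ℚ) = d * Q i j := fun i j => by
    obtain ⟨c, hc⟩ := hd i j
    exact ⟨c * (Q i j).num, by
      rw [hc]
      push_cast
      rw [← Rat.mul_den_eq_num]
      ring⟩
  choose M hM using hint
  exact ⟨d, Finset.prod_pos fun i _ => Finset.prod_pos fun j _ => (Q i j).pos,
    Matrix.of M, by ext i j; simp [hM]⟩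

theorem exists_eq_smul_isPrimitiveMatrix {m n : Type*} [Fintype m] [Fintype n]
    {M : Matrix m n ℤ} (hM : M ≠ 0) : ∃ g : ℤ, 0 < g ∧ ∃ C, IsPrimitiveMatrix C ∧ M = g • C := by
  obtain ⟨i, j, hij⟩ : ∃ i j, M i j ≠ 0 := by
    by_contra! h
    exact hM (Matrix.ext h)
  obtain ⟨c, hc, hc1⟩ := Finset.extract_gcd (fun ij : m × n => M ij.1 ij.2)
    (s := Finset.univ) ⟨(i, j), Finset.mem_univ _⟩
  set g := Finset.univ.gcd (fun ij : m × n => M ij.1 ij.2)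
  have hg0 : g ≠ 0 := fun h0 => hij (Finset.gcd_eq_zero_iff.1 h0 (i, j) (Finset.mem_univ _))
  have hg : 0 ≤ g := Int.nonneg_of_normalize_eq_self Finset.normalize_gcd
  refine ⟨g, lt_of_le_of_ne hg (Ne.symm hg0), Matrix.of fun i j => c (i, j), fun p hp h0 => ?_,
    Matrix.ext fun i j => hc (i, j) (Finset.mem_univ _)⟩
  have hpc : (p : ℤ) ∣ Finset.univ.gcd c := Finset.dvd_gcd fun ij _ =>
    (ZMod.intCast_zmod_eq_zero_iff_dvd _ _).1 (congr_fun₂ h0 ij.1 ij.2)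
  rw [hc1] at hpc
  exact hp.not_dvd_one (by exact_mod_cast hpc)

theorem exists_eq_smul_map_intCast {m n : Type*} [Fintype m] [Fintype n] {Q : Matrix m n ℚ}
    (hQ : Q ≠ 0) : ∃ q : ℚ, 0 < q ∧ ∃ C, IsPrimitiveMatrix C ∧ Q = q • C.map Int.cast := by
  obtain ⟨d, hd, M, hM⟩ := exists_nat_smul_eq_map_intCast Q
  have hM0 : M ≠ 0 := by
    rintro rfl
    exact hQ (by simpa [hd.ne'] using hM)
  obtain ⟨g, hg, C, hC, rfl⟩ := exists_eq_smul_isPrimitiveMatrix hM0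
  refine ⟨g / d, by positivity, C, hC, Matrix.ext fun i j => ?_⟩
  have := congr_fun₂ hM i j
  simp only [Matrix.smul_apply, Matrix.map_apply, smul_eq_mul, Int.cast_mul] at this ⊢
  field_simp
  linarith

theorem exists_primitive_of_not_matEquiv {A₁ A : Matrix (Fin 2) (Fin 2) ℚ} (h₁ : 0 < A₁.det)
    (h : 0 < A.det) (hne : ¬ MatEquiv A₁ A) :
    ∃ q : ℚ, 0 < q ∧ ∃ C : Matrix (Fin 2) (Fin 2) ℤ, IsPrimitiveMatrix C ∧
      A * A₁.adjugate = q • C.map Int.cast ∧ 1 < C.det := by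
  have hdet : (A * A₁.adjugate).det = A.det * A₁.det := by simp [det_mul, det_adjugate]
  obtain ⟨q, hq, C, hC, hAC⟩ := exists_eq_smul_map_intCast (Q := A * A₁.adjugate) fun h0 => by
    rw [h0, det_zero] at hdet
    nlinarith
  have hCdet : (C.det : ℚ) * q ^ 2 = A.det * A₁.det := by
    rw [← hdet, hAC, det_smul, ← Int.cast_det, Fintype.card_fin]
    ring
  have hCpos : 0 < C.det := by
    have : (0 : ℚ) < C.det := pos_of_mul_pos_left (hCdet ▸ mul_pos h h₁) (by positivity)
    exact_mod_cast this
  refine ⟨q, hq, C, hC, hAC, lt_of_le_of_ne hCpos fun hC1 =>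
    hne ⟨C, q / A₁.det, hC1.symm, by positivity, ?_⟩⟩
  have : A₁.det • A = q • (C.map Int.cast * A₁) := by
    rw [← smul_mul, ← hAC, Matrix.mul_assoc, adjugate_mul, Matrix.mul_smul, Matrix.mul_one]
  rw [div_eq_inv_mul, mul_smul, ← this, inv_smul_smul₀ h₁.ne']

theorem dvd_mulVec_apply {R m n : Type*} [CommSemiring R] [Fintype n] {d : R}
    {M : Matrix m n R} {v : n → R} (h : ∀ j, d ∣ v j) (i : m) : d ∣ (M *ᵥ v) i :=
  Finset.dvd_sum fun j _ => (h j).mul_left _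

theorem gcd_mulVec_eq_gcd {C : Matrix (Fin 2) (Fin 2) ℤ} {u : Fin 2 → ℤ}
    (h : ∀ p : ℕ, p.Prime → (p : ℤ) ∣ C.det → ¬ ∀ i, (p : ℤ) ∣ (C *ᵥ u) i) :
    Int.gcd ((C *ᵥ u) 0) ((C *ᵥ u) 1) = Int.gcd (u 0) (u 1) := by
  set G := Int.gcd ((C *ᵥ u) 0) ((C *ᵥ u) 1)
  set g := Int.gcd (u 0) (u 1)
  have hgu : ∀ i, (g : ℤ) ∣ u i := Fin.forall_fin_two.2 ⟨Int.gcd_dvd_left .., Int.gcd_dvd_right ..⟩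
  have hGCu : ∀ i, (G : ℤ) ∣ (C *ᵥ u) i :=
    Fin.forall_fin_two.2 ⟨Int.gcd_dvd_left .., Int.gcd_dvd_right ..⟩
  have hgG : g ∣ G := Int.dvd_gcd (dvd_mulVec_apply hgu 0) (dvd_mulVec_apply hgu 1)
  have hGdet : ∀ i, (G : ℤ) ∣ C.det * u i := by
    intro i
    have hadj : C.adjugate *ᵥ (C *ᵥ u) = C.det • u := by
      rw [mulVec_mulVec, adjugate_mul, smul_mulVec, one_mulVec]
    have := dvd_mulVec_apply (M := C.adjugate) hGCu i
    rwa [hadj, Pi.smul_apply, smul_eq_mul] at this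
  have hGdg : G ∣ C.det.natAbs * g := by
    rw [← Int.gcd_mul_left]
    exact Int.dvd_gcd (hGdet 0) (hGdet 1)
  have hcop : G.Coprime C.det.natAbs := Nat.coprime_of_dvd fun p hp hpG hpdet =>
    h p hp (Int.natCast_dvd.2 hpdet) fun i => (Int.natCast_dvd_natCast.2 hpG).trans (hGCu i)
  exact Nat.dvd_antisymm (hcop.dvd_of_dvd_mul_left hGdg) hgG

theorem map_intCast_mulVec_eq_zero_iff {m n : Type*} [Fintype n] (C : Matrix m n ℤ)
    (u : n → ℤ) (p : ℕ) :
    C.map (Int.cast : ℤ → ZMod p) *ᵥ (Int.cast ∘ u) = 0 ↔ ∀ i, (p : ℤ) ∣ (C *ᵥ u) i := by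
  simp only [funext_iff, ← ZMod.intCast_zmod_eq_zero_iff_dvd]
  have := RingHom.map_mulVec (Int.castRingHom (ZMod p)) C u
  simp_all

/-- Among `e₀`, `e₁`, `e₀ + e₁` a nonzero matrix kills at most one, since any two of them span. -/
theorem exists_mulVec_natCast_ne_zero {R : Type*} [CommRing R]
    {M N : Matrix (Fin 2) (Fin 2) R} (hM : M ≠ 0) (hN : N ≠ 0) :
    ∃ w : Fin 2 → ℕ, M *ᵥ (Nat.cast ∘ w) ≠ 0 ∧ N *ᵥ (Nat.cast ∘ w) ≠ 0 := by
  have hsum : ∀ A : Matrix (Fin 2) (Fin 2) R,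
      A *ᵥ (Nat.cast ∘ ![1, 1]) = A *ᵥ (Nat.cast ∘ ![1, 0]) + A *ᵥ (Nat.cast ∘ ![0, 1]) := by
    intro A
    rw [← mulVec_add]
    congr 1
    ext i
    fin_cases i <;> simp
  have hcols : ∀ A : Matrix (Fin 2) (Fin 2) R, A ≠ 0 →
      ¬ (A *ᵥ (Nat.cast ∘ ![1, 0]) = 0 ∧ A *ᵥ (Nat.cast ∘ ![0, 1]) = 0) := by
    rintro A hA ⟨h₀, h₁⟩
    refine hA (Matrix.ext fun i j => ?_)
    fin_cases j
    · simpa [mulVec, dotProduct] using congr_fun h₀ i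
    · simpa [mulVec, dotProduct] using congr_fun h₁ i
  have hM' := hcols M hM
  have hN' := hcols N hN
  by_contra! h
  have h₀ := h ![1, 0]
  have h₁ := h ![0, 1]
  have h₂ := h ![1, 1]
  rw [hsum, hsum] at h₂
  grind

theorem exists_intCast_comp_eq {ι : Type*} (S : Finset ℕ) (hS : ∀ p ∈ S, p.Prime)
    (w : ℕ → ι → ℕ) : ∃ u : ι → ℤ, ∀ p ∈ S, (Int.cast ∘ u : ι → ZMod p) = Nat.cast ∘ w p := by
  have hcop : Set.Pairwise S (Function.onFun Nat.Coprime id) := fun p hp q hq hpq =>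
    (Nat.coprime_primes (hS p hp) (hS q hq)).2 hpq
  refine ⟨fun i => Nat.chineseRemainderOfFinset (fun p => w p i) id S
    (fun p hp => (hS p hp).ne_zero) hcop, fun p hp => funext fun i => ?_⟩
  simpa using (ZMod.natCast_eq_natCast_iff _ _ _).2
    ((Nat.chineseRemainderOfFinset (fun p => w p i) id S _ hcop).2 p hp)

theorem exists_gcd_mulVec_eq_gcd {C₂ C₃ : Matrix (Fin 2) (Fin 2) ℤ}
    (hC₂ : IsPrimitiveMatrix C₂) (hC₃ : IsPrimitiveMatrix C₃) (h₂ : 1 < C₂.det)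
    (h₃ : 1 < C₃.det) :
    ∃ u : Fin 2 → ℤ, 0 < Int.gcd (u 0) (u 1) ∧
      Int.gcd ((C₂ *ᵥ u) 0) ((C₂ *ᵥ u) 1) = Int.gcd (u 0) (u 1) ∧
      Int.gcd ((C₃ *ᵥ u) 0) ((C₃ *ᵥ u) 1) = Int.gcd (u 0) (u 1) := by
  set S := (C₂.det * C₃.det).natAbs.primeFactors
  have hS : ∀ p ∈ S, p.Prime := fun p hp => Nat.prime_of_mem_primeFactors hp
  choose! w hw using fun p hp =>
    exists_mulVec_natCast_ne_zero (hC₂ p (hS p hp)) (hC₃ p (hS p hp))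
  obtain ⟨u, hu⟩ := exists_intCast_comp_eq S hS w
  have hmem : ∀ p : ℕ, p.Prime → (p : ℤ) ∣ C₂.det * C₃.det → p ∈ S := fun p hp hdvd =>
    Nat.mem_primeFactors.2 ⟨hp, Int.natCast_dvd.1 hdvd, by positivity⟩
  have hgood₂ : ∀ p : ℕ, p.Prime → (p : ℤ) ∣ C₂.det → ¬ ∀ i, (p : ℤ) ∣ (C₂ *ᵥ u) i :=
    fun p hp hdvd => by
      rw [← map_intCast_mulVec_eq_zero_iff, hu p (hmem p hp (hdvd.mul_right _))]
      exact (hw p (hmem p hp (hdvd.mul_right _))).1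
  have hgood₃ : ∀ p : ℕ, p.Prime → (p : ℤ) ∣ C₃.det → ¬ ∀ i, (p : ℤ) ∣ (C₃ *ᵥ u) i :=
    fun p hp hdvd => by
      rw [← map_intCast_mulVec_eq_zero_iff, hu p (hmem p hp (hdvd.mul_left _))]
      exact (hw p (hmem p hp (hdvd.mul_left _))).2
  refine ⟨u, Nat.pos_of_ne_zero fun h0 => ?_, gcd_mulVec_eq_gcd hgood₂, gcd_mulVec_eq_gcd hgood₃⟩
  obtain rfl : u = 0 := funext (Fin.forall_fin_two.2 (Int.gcd_eq_zero_iff.1 h0))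
  obtain ⟨p, hp, hpdvd⟩ := Nat.exists_prime_and_dvd (n := C₂.det.natAbs) (by omega)
  exact hgood₂ p hp (Int.natCast_dvd.2 hpdvd) (by simp)

noncomputable def separatingMatrix (A₁ : Matrix (Fin 2) (Fin 2) ℚ) (u : Fin 2 → ℤ) :
    Matrix (Fin 2) (Fin 2) ℚ :=
  A₁.adjugate * (!![u 0, -u 1; u 1, u 0]).map Int.cast

theorem det_separatingMatrix (A₁ : Matrix (Fin 2) (Fin 2) ℚ) (u : Fin 2 → ℤ) :
    (separatingMatrix A₁ u).det = A₁.det * (u 0 ^ 2 + u 1 ^ 2) := by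
  rw [separatingMatrix, det_mul, det_adjugate, ← Int.cast_det, det_fin_two_of, Fintype.card_fin]
  push_cast
  ring

theorem nlc_mul_separatingMatrix {A A₁ : Matrix (Fin 2) (Fin 2) ℚ} {q : ℚ}
    {C : Matrix (Fin 2) (Fin 2) ℤ} (hq : 0 < q) (hA : A * A₁.adjugate = q • C.map Int.cast)
    (u : Fin 2 → ℤ) :
    nlc (A * separatingMatrix A₁ u) =
      (Int.gcd ((C *ᵥ u) 0) ((C *ᵥ u) 1) : ℚ) ^ 2 / (C.det * (u 0 ^ 2 + u 1 ^ 2)) := by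
  have hmap : C.map (Int.cast : ℤ → ℚ) * (!![u 0, -u 1; u 1, u 0]).map Int.cast =
      (C * !![u 0, -u 1; u 1, u 0]).map Int.cast :=
    (Matrix.map_mul (f := Int.castRingHom ℚ)).symm
  rw [separatingMatrix, ← Matrix.mul_assoc, hA, smul_mul, hmap, nlc_smul_map_intCast hq]
  simp [mulVec, dotProduct, mul_apply, Fin.sum_univ_two, det_mul, det_fin_two_of, sq]

theorem sq_add_sq_pos_of_gcd_pos {u : Fin 2 → ℤ} (hu : 0 < Int.gcd (u 0) (u 1)) :
    (0 : ℚ) < u 0 ^ 2 + u 1 ^ 2 := by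
  rcases Int.gcd_pos_iff.1 hu with h | h <;> positivity

theorem nlc_mul_separatingMatrix_lt {A A₁ : Matrix (Fin 2) (Fin 2) ℚ} {q : ℚ}
    {C : Matrix (Fin 2) (Fin 2) ℤ} (h₁ : 0 < A₁.det) (hq : 0 < q)
    (hA : A * A₁.adjugate = q • C.map Int.cast) (hC : 1 < C.det) {u : Fin 2 → ℤ}
    (hu : 0 < Int.gcd (u 0) (u 1))
    (hgcd : Int.gcd ((C *ᵥ u) 0) ((C *ᵥ u) 1) = Int.gcd (u 0) (u 1)) :
    nlc (A * separatingMatrix A₁ u) < nlc (A₁ * separatingMatrix A₁ u) := by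
  have hA₁ : A₁ * A₁.adjugate = A₁.det • (1 : Matrix (Fin 2) (Fin 2) ℤ).map Int.cast := by
    simp [mul_adjugate]
  rw [nlc_mul_separatingMatrix hq hA, nlc_mul_separatingMatrix h₁ hA₁, one_mulVec, det_one, hgcd,
    Int.cast_one, one_mul]
  have hs := sq_add_sq_pos_of_gcd_pos hu
  have hC' : (1 : ℚ) < C.det := by exact_mod_cast hC
  exact div_lt_div_of_pos_left (by positivity) hs (lt_mul_of_one_lt_left hs hC')

theorem nlc_separates_three_general (A₁ A₂ A₃ : Matrix (Fin 2) (Fin 2) ℚ)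
    (h₁ : 0 < A₁.det) (h₂ : 0 < A₂.det) (h₃ : 0 < A₃.det)
    (h₁₂ : ¬ MatEquiv A₁ A₂) (h₁₃ : ¬ MatEquiv A₁ A₃) :
    ∃ B : Matrix (Fin 2) (Fin 2) ℚ, 0 < B.det ∧
      ((nlc (A₂ * B) < nlc (A₁ * B) ∧ nlc (A₃ * B) < nlc (A₁ * B)) ∨
       (nlc (A₁ * B) < nlc (A₂ * B) ∧ nlc (A₃ * B) < nlc (A₂ * B)) ∨
       (nlc (A₁ * B) < nlc (A₃ * B) ∧ nlc (A₂ * B) < nlc (A₃ * B))) := by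
  obtain ⟨q₂, hq₂, C₂, hC₂, hA₂, hdet₂⟩ := exists_primitive_of_not_matEquiv h₁ h₂ h₁₂
  obtain ⟨q₃, hq₃, C₃, hC₃, hA₃, hdet₃⟩ := exists_primitive_of_not_matEquiv h₁ h₃ h₁₃
  obtain ⟨u, hu, hgcd₂, hgcd₃⟩ := exists_gcd_mulVec_eq_gcd hC₂ hC₃ hdet₂ hdet₃
  refine ⟨separatingMatrix A₁ u, ?_, Or.inl
    ⟨nlc_mul_separatingMatrix_lt h₁ hq₂ hA₂ hdet₂ hu hgcd₂,
      nlc_mul_separatingMatrix_lt h₁ hq₃ hA₃ hdet₃ hu hgcd₃⟩⟩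
  rw [det_separatingMatrix]
  exact mul_pos h₁ (sq_add_sq_pos_of_gcd_pos hu)

/-- For pairwise non-equivalent `A₁, A₂, A₃ ∈ GL₂⁺(ℚ)` there is `B ∈ GL₂⁺(ℚ)` such that among
`nlc(A₁B), nlc(A₂B), nlc(A₃B)` one is strictly bigger than the two others. -/
theorem nlc_separates_three (A₁ A₂ A₃ : Matrix (Fin 2) (Fin 2) ℚ)
    (h₁ : 0 < A₁.det) (h₂ : 0 < A₂.det) (h₃ : 0 < A₃.det)
    (h₁₂ : ¬ MatEquiv A₁ A₂) (h₁₃ : ¬ MatEquiv A₁ A₃) (h₂₃ : ¬ MatEquiv A₂ A₃) :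
    ∃ B : Matrix (Fin 2) (Fin 2) ℚ, 0 < B.det ∧
      ((nlc (A₂ * B) < nlc (A₁ * B) ∧ nlc (A₃ * B) < nlc (A₁ * B)) ∨
       (nlc (A₁ * B) < nlc (A₂ * B) ∧ nlc (A₃ * B) < nlc (A₂ * B)) ∨
       (nlc (A₁ * B) < nlc (A₃ * B) ∧ nlc (A₂ * B) < nlc (A₃ * B))) :=
  nlc_separates_three_general A₁ A₂ A₃ h₁ h₂ h₃ h₁₂ h₁₃
end

section
/- For the matrices A₁ = [[1,0],[0,1]], A₂ = [[1,1/2],[0,1]], A₃ = [[4,0],[0,1]] in GL₂⁺(ℚ), for every B ∈ GL₂⁺(ℚ), at least two of the three values nlc(A₁B), nlc(A₂B), nlc(A₃B) are equal. -/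
/-!
Only the first columns `(a, c)`, `(a + c/2, c)`, `(4a, c)` and the determinants `D, D, 4D` of
`A₁B, A₂B, A₃B` enter. Clearing denominators and dividing out the gcd reduces to a coprime
integer pair `(m, k)`, where the three contents become `1`, `gcd(2m+k, 2k)/2` and `gcd(4m, k)/2`
(the last one halved to absorb the factor `4` of its determinant). According as `k` is odd,
`2 mod 4` or `0 mod 4`, the last two, the first and last, or the first two of these are equal.
-/

theorem ratGcd_intCast_div (m k : ℤ) {n : ℤ} (hn : 0 < n) :
    ratGcd (m / n) (k / n) = Int.gcd m k / n := by
  have num_mul (x : ℤ) : ((x : ℚ) / n).num * n = x * ((x : ℚ) / n).den := by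
    have := Rat.mul_den_eq_num ((x : ℚ) / n)
    qify
    rw [← this]
    field_simp
  set a : ℚ := m / n
  set b : ℚ := k / n
  have hgcd : n.natAbs * Int.gcd (a.num * b.den) (b.num * a.den) =
      ((a.den : ℤ) * b.den).natAbs * Int.gcd m k := by
    rw [← Int.gcd_mul_left, ← Int.gcd_mul_left]
    congr 1
    · linear_combination (b.den : ℤ) * num_mul m
    · linear_combination (a.den : ℤ) * num_mul k
  have hgcdZ := congrArg (Nat.cast : ℕ → ℤ) hgcd
  push_cast at hgcdZ
  rw [abs_of_pos hn, abs_of_pos (by positivity)] at hgcdZ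
  rw [ratGcd, div_eq_div_iff (by positivity) (by positivity)]
  exact_mod_cast (by push_cast; linear_combination hgcdZ)

theorem Int.gcd_trichotomy_of_isCoprime {m k : ℤ} (h : IsCoprime m k) :
    Int.gcd (2 * m + k) (2 * k) = 2 ∨ Int.gcd (4 * m) k = 2 ∨
      Int.gcd (2 * m + k) (2 * k) = Int.gcd (4 * m) k := by
  rcases Int.even_or_odd k with ⟨l, rfl⟩ | hk
  · rw [← two_mul] at h ⊢
    have hm : Odd m := Int.isCoprime_two_right.mp h.of_mul_right_left
    rcases Int.even_or_odd l with ⟨j, rfl⟩ | hl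
    · left
      rw [← two_mul] at h ⊢
      have hmj : Odd (m + 2 * j) := hm.add_even (even_two_mul j)
      have : IsCoprime (m + 2 * j) (2 * (2 * j)) :=
        (Int.isCoprime_two_right.mpr hmj).mul_right ((Int.isCoprime_two_right.mpr hmj).mul_right
          (IsCoprime.add_mul_right_left h.of_mul_right_right.of_mul_right_right 2))
      rw [show 2 * m + 2 * (2 * j) = 2 * (m + 2 * j) by ring, Int.gcd_mul_left,
        Int.isCoprime_iff_gcd_eq_one.mp this]
      rfl
    · right; left
      have : IsCoprime (2 * m) l :=
        (Int.isCoprime_two_left.mpr hl).mul_left h.of_mul_right_right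
      rw [show 4 * m = 2 * (2 * m) by ring, Int.gcd_mul_left, Int.isCoprime_iff_gcd_eq_one.mp this]
      rfl
  · right; right
    have h2mk : IsCoprime (2 * m) k := (Int.isCoprime_two_left.mpr hk).mul_left h
    have hodd : Odd (2 * m + k) := (even_two_mul m).add_odd hk
    rw [Int.isCoprime_iff_gcd_eq_one.mp ((Int.isCoprime_two_right.mpr hodd).mul_right
        (by simpa using h2mk.add_mul_right_left 1)),
      show 4 * m = 2 * (2 * m) by ring, Int.isCoprime_iff_gcd_eq_one.mp
        ((Int.isCoprime_two_left.mpr hk).mul_left h2mk)]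

theorem Int.gcd_trichotomy (m k : ℤ) :
    Int.gcd (2 * m + k) (2 * k) = 2 * Int.gcd m k ∨ Int.gcd (4 * m) k = 2 * Int.gcd m k ∨
      Int.gcd (2 * m + k) (2 * k) = Int.gcd (4 * m) k := by
  rcases Nat.eq_zero_or_pos (Int.gcd m k) with h0 | hpos
  · obtain ⟨rfl, rfl⟩ := Int.gcd_eq_zero_iff.mp h0
    simp
  obtain ⟨g, m', k', -, hcop, rfl, rfl⟩ := Int.exists_gcd_one' hpos
  have scale (x y : ℤ) : Int.gcd (x * g) (y * g) = Int.gcd x y * g := by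
    rw [Int.gcd_mul_right]; simp
  rw [show 2 * (m' * g) + k' * g = (2 * m' + k') * g by ring, show 2 * (k' * g) = 2 * k' * g by ring,
    show 4 * (m' * g) = 4 * m' * g by ring, scale, scale, scale, hcop]
  rcases Int.gcd_trichotomy_of_isCoprime (Int.isCoprime_iff_gcd_eq_one.mpr hcop) with h | h | h <;>
    simp [h]

theorem Rat.exists_eq_intCast_div_of_common_den (a c : ℚ) :
    ∃ m k n : ℤ, 0 < n ∧ a = m / n ∧ c = k / n := by
  refine ⟨a.num * c.den, c.num * a.den, a.den * c.den, by positivity, ?_, ?_⟩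
  · push_cast
    rw [mul_div_mul_right _ _ (by positivity), Rat.num_div_den]
  · push_cast
    rw [mul_comm (a.den : ℚ), mul_div_mul_right _ _ (by positivity), Rat.num_div_den]

theorem ratGcd_trichotomy (a c : ℚ) :
    ratGcd (a + c / 2) c = ratGcd a c ∨ ratGcd (4 * a) c = 2 * ratGcd a c ∨
      2 * ratGcd (a + c / 2) c = ratGcd (4 * a) c := by
  obtain ⟨m, k, n, hn, rfl, rfl⟩ := Rat.exists_eq_intCast_div_of_common_den a c
  have hshear : ratGcd (m / n + k / n / 2) (k / n) = Int.gcd (2 * m + k) (2 * k) / (2 * n : ℤ) := by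
    rw [← ratGcd_intCast_div _ _ (by positivity)]
    congr 1 <;> push_cast <;> field_simp
  have hscale : ratGcd (4 * (m / n)) (k / n) = Int.gcd (4 * m) k / n := by
    rw [← ratGcd_intCast_div _ _ hn]
    push_cast; ring_nf
  rw [hshear, hscale, ratGcd_intCast_div _ _ hn]
  rcases Int.gcd_trichotomy m k with h | h | h
  · left; rw [h]; push_cast; field_simp
  · right; left; rw [h]; push_cast; field_simp
  · right; right; rw [h]; push_cast; field_simp

theorem nlc_upperTriangular_mul (p q r : ℚ) (B : Matrix (Fin 2) (Fin 2) ℚ) :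
    nlc (!![p, q; 0, r] * B) = ratGcd (p * B 0 0 + q * B 1 0) (r * B 1 0) ^ 2 / (p * r * B.det) := by
  rw [nlc, Matrix.det_mul, Matrix.det_fin_two_of]
  simp [Matrix.mul_apply, Fin.sum_univ_two]

theorem nlc_counterexample_general (B : Matrix (Fin 2) (Fin 2) ℚ) :
    nlc (!![1, 0; 0, 1] * B) = nlc (!![1, 1/2; 0, 1] * B) ∨
    nlc (!![1, 0; 0, 1] * B) = nlc (!![4, 0; 0, 1] * B) ∨
    nlc (!![1, 1/2; 0, 1] * B) = nlc (!![4, 0; 0, 1] * B) := by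
  simp only [nlc_upperTriangular_mul, one_mul, zero_mul, add_zero, one_div_mul_eq_div]
  rcases ratGcd_trichotomy (B 0 0) (B 1 0) with h | h | h
  · left; rw [h]
  · right; left; rw [h]; ring
  · right; right; rw [← h]; ring

/-- For `A₁ = [[1,0],[0,1]]`, `A₂ = [[1,1/2],[0,1]]`, `A₃ = [[4,0],[0,1]]`, for every
`B ∈ GL₂⁺(ℚ)` at least two of `nlc(A₁B), nlc(A₂B), nlc(A₃B)` are equal. -/
theorem nlc_counterexample (B : Matrix (Fin 2) (Fin 2) ℚ) (hB : 0 < B.det) :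
    nlc (!![1, 0; 0, 1] * B) = nlc (!![1, 1/2; 0, 1] * B) ∨
    nlc (!![1, 0; 0, 1] * B) = nlc (!![4, 0; 0, 1] * B) ∨
    nlc (!![1, 1/2; 0, 1] * B) = nlc (!![4, 0; 0, 1] * B) :=
  nlc_counterexample_general B
end
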